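/- arXiv:0807.1516 — 5 statements merged into one kernel-verified Lean document; each statement's English description precedes it below -/
import Mathlib

section
/- Let E and F be real Banach spaces, M ⊆ E open, k ≥ 1, h : M → ℝ a C^k function whose derivative dh(m) is nonzero at every m with h(m) = 0, and f : M → F a C^k map with f(m) = 0 whenever h(m) = 0. Then: (i) for every m ∈ M with h(m) = 0 there is a unique vector e(m) ∈ F such that Df(m)·u = (dh(m)·u)·e(m) for all u ∈ E; and (ii) the map f̂ : M → F defined by f̂(m) := f(m)/h(m) when h(m) ≠ 0 and f̂(m) := e(m) when h(m) = 0 is of class C^{k−1} (where C⁰ means continuous). -/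
/-!
Near a zero `m` of `φ`, let `ℓ = dφ(m)` and pick `v` with `ℓ v = 1`. The map
`Θ x = x + (φ x - ℓ x) • v` has derivative the identity at `m` and satisfies `ℓ ∘ Θ = φ`, so
it is a local `C^k` diffeomorphism straightening `φ` into the linear form `ℓ`. A function that
vanishes on `ker ℓ` is, by the fundamental theorem of calculus along `v`, of the form `ℓ • G`,
where `G` is a parametric integral of its derivative and hence of class `C^{k-1}`. Pulling back by
`Θ` gives `f = φ • g` near `m` with `g` of class `C^{k-1}`. Differentiating this product at a zero
of `φ` needs only the continuity of `g` and gives `Df = dφ ⊗ g`, so `e = g` on the zeros of `φ`,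
while `f / φ = g` off them; hence `f̂ = g` near `m`.
-/

open Set Filter Topology MeasureTheory intervalIntegral Asymptotics
open scoped Interval

universe u v

section ParametricIntegral

theorem IsOpen.eventually_forall_prodMk_mem {X Y : Type*} [TopologicalSpace X]
    [TopologicalSpace Y] {W : Set (X × Y)} {K : Set Y} {x₀ : X} (hW : IsOpen W)
    (hK : IsCompact K) (hx₀ : ∀ y ∈ K, (x₀, y) ∈ W) : ∀ᶠ x in 𝓝 x₀, ∀ y ∈ K, (x, y) ∈ W :=
  hK.eventually_forall_of_forall_eventually fun y hy => hW.mem_nhds (hx₀ y hy)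

theorem continuousOn_slice {X Y Z : Type*} [TopologicalSpace X] [TopologicalSpace Y]
    [TopologicalSpace Z] {Φ : X × Y → Z} {x : X} {s : Set Y}
    (hΦ : ∀ y ∈ s, ContinuousAt Φ (x, y)) : ContinuousOn (fun y => Φ (x, y)) s := fun y hy =>
  ((hΦ y hy).comp (by fun_prop : ContinuousAt (fun y : Y => (x, y)) y)).continuousWithinAt

theorem exists_eventually_forall_norm_lt {X Y G : Type*} [TopologicalSpace X]
    [TopologicalSpace Y] [SeminormedAddCommGroup G] {Φ : X × Y → G} {x₀ : X} {K : Set Y}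
    (hK : IsCompact K) (hΦ : ∀ y ∈ K, ContinuousAt Φ (x₀, y)) :
    ∃ C, ∀ᶠ x in 𝓝 x₀, ∀ y ∈ K, ‖Φ (x, y)‖ < C := by
  obtain ⟨C, hC⟩ := hK.exists_bound_of_continuousOn (continuousOn_slice hΦ)
  exact ⟨C + 1, hK.eventually_forall_of_forall_eventually fun y hy =>
    (hΦ y hy).norm.eventually_lt_const (by linarith [hC y hy])⟩

theorem continuousAt_intervalIntegral_of_continuousOn {X F : Type*} [TopologicalSpace X]
    [FirstCountableTopology X] [NormedAddCommGroup F] [NormedSpace ℝ F] {Φ : X × ℝ → F}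
    {W : Set (X × ℝ)} {x₀ : X} {a b : ℝ} (hΦ : ContinuousOn Φ W) (hW : IsOpen W)
    (hx₀ : ∀ t ∈ [[a, b]], (x₀, t) ∈ W) :
    ContinuousAt (fun x => ∫ t in a..b, Φ (x, t)) x₀ := by
  have hcont : ∀ t ∈ [[a, b]], ContinuousAt Φ (x₀, t) :=
    fun t ht => hΦ.continuousAt (hW.mem_nhds (hx₀ t ht))
  obtain ⟨C, hC⟩ := exists_eventually_forall_norm_lt isCompact_uIcc hcont
  refine continuousAt_of_dominated_interval (F := fun x t => Φ (x, t)) (bound := fun _ => C)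
    ?_ ?_ intervalIntegrable_const ?_
  · filter_upwards [hW.eventually_forall_prodMk_mem isCompact_uIcc hx₀] with x hx
    exact ((continuousOn_slice fun t ht => hΦ.continuousAt (hW.mem_nhds (hx t ht))).mono
      uIoc_subset_uIcc).aestronglyMeasurable measurableSet_uIoc
  · filter_upwards [hC] with x hx
    exact ae_of_all _ fun t ht => (hx t (uIoc_subset_uIcc ht)).le
  · exact ae_of_all _ fun t ht =>
      (hcont t (uIoc_subset_uIcc ht)).comp (f := fun x : X => (x, t)) (by fun_prop)

variable {E : Type u} [NormedAddCommGroup E] [NormedSpace ℝ E]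

theorem hasFDerivAt_intervalIntegral_of_contDiffAt {F : Type*} [NormedAddCommGroup F]
    [NormedSpace ℝ F] {Φ : E × ℝ → F} {x₀ : E} {a b : ℝ}
    (hΦ : ∀ t ∈ [[a, b]], ContDiffAt ℝ 1 Φ (x₀, t)) :
    HasFDerivAt (fun x => ∫ t in a..b, Φ (x, t))
      (∫ t in a..b, fderiv ℝ Φ (x₀, t) ∘L ContinuousLinearMap.inl ℝ E ℝ) x₀ := by
  have hD : ∀ t ∈ [[a, b]], ContinuousAt (fderiv ℝ Φ) (x₀, t) :=
    fun t ht => (hΦ t ht).continuousAt_fderiv one_ne_zero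
  obtain ⟨C, hC⟩ := exists_eventually_forall_norm_lt isCompact_uIcc hD
  have hnear : ∀ᶠ x in 𝓝 x₀, ∀ t ∈ [[a, b]],
      ContDiffAt ℝ 1 Φ (x, t) ∧ ‖fderiv ℝ Φ (x, t)‖ < C :=
    ((isCompact_uIcc.eventually_forall_of_forall_eventually fun t ht =>
      (hΦ t ht).eventually (by simp)).and hC).mono fun x hx t ht => ⟨hx.1 t ht, hx.2 t ht⟩
  have hIoc : Ι a b ⊆ [[a, b]] := uIoc_subset_uIcc
  refine hasFDerivAt_integral_of_dominated_of_fderiv_le (F := fun x t => Φ (x, t))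
    (F' := fun x t => fderiv ℝ Φ (x, t) ∘L ContinuousLinearMap.inl ℝ E ℝ)
    (bound := fun _ => C) hnear ?_ ?_ ?_ ?_ intervalIntegrable_const ?_
  · filter_upwards [hnear] with x hx
    exact ((continuousOn_slice fun t ht => (hx t ht).1.continuousAt).mono
      hIoc).aestronglyMeasurable measurableSet_uIoc
  · exact (continuousOn_slice fun t ht => (hΦ t ht).continuousAt).intervalIntegrable
  · exact (((continuousOn_slice hD).clm_comp continuousOn_const).mono hIoc).aestronglyMeasurable
      measurableSet_uIoc
  · refine ae_of_all _ fun t ht x hx => ?_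
    calc ‖fderiv ℝ Φ (x, t) ∘L ContinuousLinearMap.inl ℝ E ℝ‖
        ≤ ‖fderiv ℝ Φ (x, t)‖ * ‖ContinuousLinearMap.inl ℝ E ℝ‖ :=
          ContinuousLinearMap.opNorm_comp_le _ _
      _ ≤ ‖fderiv ℝ Φ (x, t)‖ :=
          mul_le_of_le_one_right (norm_nonneg _) (ContinuousLinearMap.norm_inl_le_one ℝ E ℝ)
      _ ≤ C := (hx t (hIoc ht)).2.le
  · exact ae_of_all _ fun t ht x hx => ((hx t (hIoc ht)).1.differentiableAt
      one_ne_zero).hasFDerivAt.comp x (hasFDerivAt_prodMk_left x t)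

/-- The induction on `n` passes from `F` to `E →L[ℝ] F`, which lives in universe `max u v`;
`contDiffAt_intervalIntegral` removes this restriction on `F` through `ULift`. -/
theorem contDiffAt_intervalIntegral_univ_max {F : Type max u v} [NormedAddCommGroup F]
    [NormedSpace ℝ F] (n : ℕ) {Φ : E × ℝ → F} {W : Set (E × ℝ)} {x₀ : E}
    {a b : ℝ} (hΦ : ContDiffOn ℝ n Φ W) (hW : IsOpen W) (hx₀ : ∀ t ∈ [[a, b]], (x₀, t) ∈ W) :
    ContDiffAt ℝ n (fun x => ∫ t in a..b, Φ (x, t)) x₀ := by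
  have hslices := hW.eventually_forall_prodMk_mem isCompact_uIcc hx₀
  induction n generalizing F with
  | zero =>
    exact contDiffAt_zero.2 ⟨_, hslices, fun x hx =>
      (continuousAt_intervalIntegral_of_continuousOn hΦ.continuousOn hW hx).continuousWithinAt⟩
  | succ n ih =>
    rw [Nat.cast_add, Nat.cast_one, contDiffAt_succ_iff_hasFDerivAt]
    refine ⟨_, ⟨_, hslices, fun x hx => hasFDerivAt_intervalIntegral_of_contDiffAt fun t ht =>
      (hΦ.contDiffAt (hW.mem_nhds (hx t ht))).of_le (by simp)⟩,
      ih (Φ := fun p => fderiv ℝ Φ p ∘L ContinuousLinearMap.inl ℝ E ℝ) ?_⟩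
    exact (hΦ.fderiv_of_isOpen hW le_rfl).clm_comp contDiffOn_const

theorem contDiffAt_intervalIntegral {F : Type v} [NormedAddCommGroup F] [NormedSpace ℝ F]
    {n : ℕ} {Φ : E × ℝ → F} {W : Set (E × ℝ)} {x₀ : E} {a b : ℝ}
    (hΦ : ContDiffOn ℝ n Φ W) (hW : IsOpen W) (hx₀ : ∀ t ∈ [[a, b]], (x₀, t) ∈ W) :
    ContDiffAt ℝ n (fun x => ∫ t in a..b, Φ (x, t)) x₀ := by
  let e : ULift.{u} F ≃L[ℝ] F := ContinuousLinearEquiv.ulift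
  have hlift := contDiffAt_intervalIntegral_univ_max.{u, v} n
    (e.symm.contDiff.comp_contDiffOn hΦ) hW hx₀
  refine (e.contDiff.contDiffAt.comp x₀ hlift).congr_of_eventuallyEq
    (Eventually.of_forall fun x => ?_)
  simp only [Function.comp_apply, intervalIntegral, e.symm.integral_comp_comm, map_sub,
    e.apply_symm_apply]

end ParametricIntegral

section ProductWithVanishingFactor

variable {𝕜 E F : Type*} [NontriviallyNormedField 𝕜] [NormedAddCommGroup E] [NormedSpace 𝕜 E]
  [NormedAddCommGroup F] [NormedSpace 𝕜 F]

theorem HasFDerivAt.smul_of_eq_zero {φ : E → 𝕜} {φ' : E →L[𝕜] 𝕜} {g : E → F} {x : E}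
    (hφ : HasFDerivAt φ φ' x) (hφx : φ x = 0) (hg : ContinuousAt g x) :
    HasFDerivAt (fun y => φ y • g y) (φ'.smulRight (g x)) x := by
  rw [hasFDerivAt_iff_isLittleO] at hφ ⊢
  have h₁ : (fun y => (φ y - φ x - φ' (y - x)) • g y) =o[𝓝 x] fun y => y - x := by
    simpa using (isLittleO_norm_right.2 hφ).smul_isBigO (hg.tendsto.isBigO_one ℝ)
  have h₂ : (fun y => φ' (y - x) • (g y - g x)) =o[𝓝 x] fun y => y - x := by
    have hgx : (fun y => g y - g x) =o[𝓝 x] fun _ => (1 : ℝ) :=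
      (isLittleO_one_iff ℝ).2 (by simpa using hg.tendsto.sub_const (g x))
    simpa using (isBigO_norm_right.2 (φ'.isBigO_sub (𝓝 x) x)).smul_isLittleO hgx
  refine (h₁.add h₂).congr_left fun y => ?_
  simp only [hφx, ContinuousLinearMap.smulRight_apply, zero_smul, sub_zero, sub_smul, smul_sub]
  abel

theorem fderiv_apply_eq_smul_of_eventuallyEq {φ : E → 𝕜} {f g : E → F} {x : E}
    (hφ : DifferentiableAt 𝕜 φ x) (hφx : φ x = 0) (hg : ContinuousAt g x)
    (hfg : f =ᶠ[𝓝 x] fun y => φ y • g y) (u : E) :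
    fderiv 𝕜 f x u = fderiv 𝕜 φ x u • g x := by
  rw [((hφ.hasFDerivAt.smul_of_eq_zero hφx hg).congr_of_eventuallyEq hfg).fderiv]
  rfl

theorem eq_of_forall_apply_smul_eq {ℓ : E →L[𝕜] 𝕜} (hℓ : ℓ ≠ 0) {a b : F}
    (h : ∀ u, ℓ u • a = ℓ u • b) : a = b := by
  obtain ⟨u, hu⟩ := DFunLike.ne_iff.1 hℓ
  exact smul_right_injective F hu (h u)

theorem existsUnique_fderiv_apply_eq_smul_of_eventuallyEq {φ : E → 𝕜} {f g : E → F} {x : E}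
    (hφ : DifferentiableAt 𝕜 φ x) (hφx : φ x = 0) (hφ' : fderiv 𝕜 φ x ≠ 0)
    (hg : ContinuousAt g x) (hfg : f =ᶠ[𝓝 x] fun y => φ y • g y) :
    ∃! e : F, ∀ u, fderiv 𝕜 f x u = fderiv 𝕜 φ x u • e := by
  have hDf := fderiv_apply_eq_smul_of_eventuallyEq hφ hφx hg hfg
  exact ⟨g x, hDf, fun e he => eq_of_forall_apply_smul_eq hφ' fun u => (he u).symm.trans (hDf u)⟩

theorem ite_eq_of_eventuallyEq_smul {φ : E → 𝕜} {f g e : E → F} {x : E}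
    [Decidable (φ x = 0)] (hφ : DifferentiableAt 𝕜 φ x) (hφ' : φ x = 0 → fderiv 𝕜 φ x ≠ 0)
    (he : φ x = 0 → ∀ u, fderiv 𝕜 f x u = fderiv 𝕜 φ x u • e x) (hg : ContinuousAt g x)
    (hfg : f =ᶠ[𝓝 x] fun y => φ y • g y) :
    (if φ x = 0 then e x else (φ x)⁻¹ • f x) = g x := by
  by_cases hx : φ x = 0
  · rw [if_pos hx]
    exact eq_of_forall_apply_smul_eq (hφ' hx) fun u => (he hx u).symm.trans
      (fderiv_apply_eq_smul_of_eventuallyEq hφ hx hg hfg u)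
  · rw [if_neg hx, hfg.self_of_nhds, inv_smul_smul₀ hx]

end ProductWithVanishingFactor

section Division

variable {E F : Type*} [NormedAddCommGroup E] [NormedSpace ℝ E] [NormedAddCommGroup F]
  [NormedSpace ℝ F] [CompleteSpace F] {n : ℕ}

theorem ContDiffAt.exists_eventuallyEq_smul_of_eq_zero_on_ker {f : E → F} {ℓ : E →L[ℝ] ℝ}
    {v y₀ : E} (hf : ContDiffAt ℝ (n + 1) f y₀) (hv : ℓ v = 1) (hy₀ : ℓ y₀ = 0)
    (hf0 : ∀ᶠ y in 𝓝 y₀, ℓ y = 0 → f y = 0) :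
    ∃ g : E → F, ContDiffAt ℝ n g y₀ ∧ f =ᶠ[𝓝 y₀] fun y => ℓ y • g y := by
  obtain ⟨V, hV, hVo, hy₀V⟩ := mem_nhds_iff.1 ((hf.eventually (by simp)).and hf0)
  have hfV : ContDiffOn ℝ (n + 1) f V := fun y hy => (hV hy).1.contDiffWithinAt
  -- `γ (y, ·)` runs from the point `y - ℓ y • v` of `ker ℓ` (at time `0`) to `y` (at time `1`)
  let γ : E × ℝ → E := fun p => p.1 - ℓ p.1 • v + p.2 • ℓ p.1 • v
  have hγ : ContDiff ℝ n γ := by fun_prop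
  have hW : IsOpen (γ ⁻¹' V) := hVo.preimage hγ.continuous
  have hγy₀ : ∀ t, (y₀, t) ∈ γ ⁻¹' V := fun t => by simpa [γ, hy₀] using hy₀V
  have hΦ : ContDiffOn ℝ n (fun p => fderiv ℝ f (γ p) v) (γ ⁻¹' V) :=
    ((hfV.fderiv_of_isOpen hVo le_rfl).comp hγ.contDiffOn (mapsTo_preimage γ V)).clm_apply
      contDiffOn_const
  refine ⟨fun y => ∫ t in (0 : ℝ)..1, fderiv ℝ f (γ (y, t)) v,
    contDiffAt_intervalIntegral hΦ hW fun t _ => hγy₀ t, ?_⟩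
  filter_upwards [hW.eventually_forall_prodMk_mem isCompact_Icc fun t _ => hγy₀ t] with y hy
  have hbase : f (y - ℓ y • v) = 0 :=
    (hV (by simpa [γ] using hy 0 ⟨le_rfl, zero_le_one⟩)).2 (by simp [hv])
  have htaylor := map_add_eq_sum_add_integral_iteratedFDeriv (n := 0) (x := y - ℓ y • v)
    (y := ℓ y • v) fun t ht => (hV (hy t ht)).1.of_le (by simp)
  simpa [hbase, intervalIntegral.integral_smul] using htaylor

theorem ContDiffAt.exists_eventuallyEq_smul_of_eq_zero [CompleteSpace E] {φ : E → ℝ}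
    {f : E → F} {m : E} (hφ : ContDiffAt ℝ (n + 1) φ m) (hf : ContDiffAt ℝ (n + 1) f m)
    (hφm : φ m = 0) (hφ' : fderiv ℝ φ m ≠ 0) (hf0 : ∀ᶠ x in 𝓝 m, φ x = 0 → f x = 0) :
    ∃ g : E → F, ContDiffAt ℝ n g m ∧ f =ᶠ[𝓝 m] fun x => φ x • g x := by
  set ℓ := fderiv ℝ φ m
  obtain ⟨u, hu⟩ := DFunLike.ne_iff.1 hφ'
  have hv : ℓ ((ℓ u)⁻¹ • u) = 1 := by simpa using inv_mul_cancel₀ hu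
  set v := (ℓ u)⁻¹ • u
  let Θ : E → E := fun x => x + (φ x - ℓ x) • v
  have hℓΘ : ∀ x, ℓ (Θ x) = φ x := fun x => by simp [Θ, hv]
  have hΘ : ContDiffAt ℝ (n + 1) Θ m :=
    contDiffAt_id.add ((hφ.sub ℓ.contDiff.contDiffAt).smul contDiffAt_const)
  have hΘ' : HasFDerivAt Θ ((ContinuousLinearEquiv.refl ℝ E : E ≃L[ℝ] E) : E →L[ℝ] E) m :=
    ((hasFDerivAt_id m).add (((hφ.differentiableAt (by simp)).hasFDerivAt.sub
      ℓ.hasFDerivAt).smul_const v)).congr_fderiv (by ext w; simp [ℓ])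
  have hn : (n + 1 : WithTop ℕ∞) ≠ 0 := by simp
  have hstrict := hΘ.hasStrictFDerivAt' hΘ' hn
  set Ψ := hstrict.localInverse Θ _ m
  have hfΨ : ContDiffAt ℝ (n + 1) (f ∘ Ψ) (Θ m) :=
    (hstrict.localInverse_apply_image ▸ hf).comp _ (hΘ.to_localInverse hΘ' hn)
  have hker : ∀ᶠ y in 𝓝 (Θ m), ℓ y = 0 → (f ∘ Ψ) y = 0 := by
    filter_upwards [hstrict.eventually_right_inverse,
      hstrict.localInverse_tendsto.eventually hf0] with y hy hy0 hℓy
    exact hy0 (by rw [← hℓΘ, hy, hℓy])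
  obtain ⟨G, hG, hfG⟩ :=
    hfΨ.exists_eventuallyEq_smul_of_eq_zero_on_ker hv (by rw [hℓΘ, hφm]) hker
  refine ⟨G ∘ Θ, hG.comp m (hΘ.of_le (by simp)), ?_⟩
  filter_upwards [hstrict.eventually_left_inverse, hΘ.continuousAt.eventually hfG] with x hx hxG
  calc f x = (f ∘ Ψ) (Θ x) := (congrArg f hx).symm
    _ = φ x • (G ∘ Θ) x := by rw [hxG, hℓΘ]; rfl

end Division

/-- Blow-up proposition (Euclidean/Banach form): dividing a C^k map vanishing on the
zero level set of a scalar function with nonvanishing derivative there loses exactly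
one degree of differentiability. -/
theorem stmt5 {E F : Type*} [NormedAddCommGroup E] [NormedSpace ℝ E] [CompleteSpace E]
    [NormedAddCommGroup F] [NormedSpace ℝ F] [CompleteSpace F]
    (M : Set E) (hM : IsOpen M) (k : ℕ) (hk : 1 ≤ k)
    (φ : E → ℝ) (hφ : ContDiffOn ℝ k φ M)
    (hφd : ∀ m ∈ M, φ m = 0 → fderiv ℝ φ m ≠ 0)
    (f : E → F) (hf : ContDiffOn ℝ k f M)
    (hf0 : ∀ m ∈ M, φ m = 0 → f m = 0) :
    -- (i) existence and uniqueness of e(m)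
    (∀ m ∈ M, φ m = 0 →
      ∃! e : F, ∀ u : E, fderiv ℝ f m u = fderiv ℝ φ m u • e) ∧
    -- (ii) the blown-up map f̂ is C^{k-1} on M
    (∀ e : E → F,
      (∀ m ∈ M, φ m = 0 → ∀ u : E, fderiv ℝ f m u = fderiv ℝ φ m u • e m) →
      ContDiffOn ℝ (k - 1)
        (fun m => if φ m = 0 then e m else (φ m)⁻¹ • f m) M) := by
  obtain ⟨n, rfl⟩ : ∃ n, k = n + 1 := ⟨k - 1, by omega⟩
  have hφm : ∀ m ∈ M, ContDiffAt ℝ (n + 1) φ m := fun m hm => by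
    exact_mod_cast hφ.contDiffAt (hM.mem_nhds hm)
  have hfm : ∀ m ∈ M, ContDiffAt ℝ (n + 1) f m := fun m hm => by
    exact_mod_cast hf.contDiffAt (hM.mem_nhds hm)
  have hdiv : ∀ m ∈ M, φ m = 0 →
      ∃ g : E → F, ContDiffAt ℝ n g m ∧ f =ᶠ[𝓝 m] fun x => φ x • g x := fun m hm h0 =>
    (hφm m hm).exists_eventuallyEq_smul_of_eq_zero (hfm m hm) h0 (hφd m hm h0)
      (eventually_of_mem (hM.mem_nhds hm) (hf0 ·))
  refine ⟨fun m hm h0 => ?_, fun e he m hm => ?_⟩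
  · obtain ⟨g, hg, hfg⟩ := hdiv m hm h0
    exact existsUnique_fderiv_apply_eq_smul_of_eventuallyEq
      ((hφm m hm).differentiableAt (by simp)) h0 (hφd m hm h0) hg.continuousAt hfg
  rw [show ((n + 1 : ℕ) : WithTop ℕ∞) - 1 = n by norm_cast]
  refine ContDiffAt.contDiffWithinAt ?_
  by_cases h0 : φ m = 0
  · obtain ⟨g, hg, hfg⟩ := hdiv m hm h0
    refine hg.congr_of_eventuallyEq ?_
    filter_upwards [hM.mem_nhds hm, hfg.eventuallyEq_nhds, hg.eventually (by simp)]
      with x hxM hfgx hgx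
    exact ite_eq_of_eventuallyEq_smul ((hφm x hxM).differentiableAt (by simp)) (hφd x hxM)
      (he x hxM) hgx.continuousAt hfgx
  · refine ((((hφm m hm).inv h0).smul (hfm m hm)).of_le (by simp)).congr_of_eventuallyEq ?_
    filter_upwards [(hφm m hm).continuousAt.eventually_ne h0] with x hx
    simp [hx]
end

section
/- Let E, E′ be real Banach spaces, M ⊆ E and N ⊆ E′ open, P a real Banach space, and h_M : M → ℝ, h_N : N → ℝ C¹ functions whose derivatives are nonzero at every point of their respective zero sets. Let f₁, f₂ : M → N and g₁, g₂ : N → P be C¹ maps with h_N ∘ f_i = h_M for i = 1, 2, and suppose f₂ = f₁ + O(h_M^r) and g₂ = g₁ + O(h_N^r) for some r ≥ 1. Then g₂ ∘ f₂ = g₁ ∘ f₁ + O(h_M^r), and for every m ∈ M with h_M(m) = 0, writing n := f₁(m) = f₂(m): res^r(g₂ ∘ f₂, g₁ ∘ f₁)(m) = res^r(g₂, g₁)(n) + Dg₁(n)·res^r(f₂, f₁)(m). -/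
open Set

noncomputable section

/-- `v` is the value at `m₀` of a residual witness for `f₂ = f₁ + O(φ^r)`:
on a neighborhood of `m₀` inside `M`, `f₂ - f₁ = φ^r · δ` with `δ` continuous at `m₀`
and `δ m₀ = v`. -/
def IsResidualAt {E F : Type*} [NormedAddCommGroup E] [NormedSpace ℝ E]
    [NormedAddCommGroup F] [NormedSpace ℝ F]
    (M : Set E) (φ : E → ℝ) (r : ℕ) (f₁ f₂ : E → F) (m₀ : E) (v : F) : Prop :=
  ∃ U : Set E, IsOpen U ∧ m₀ ∈ U ∧ U ⊆ M ∧
    ∃ δ : E → F, ContinuousAt δ m₀ ∧ δ m₀ = v ∧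
      ∀ m ∈ U, f₂ m - f₁ m = φ m ^ r • δ m

/-- `f₂ = f₁ + O(φ^r)` on `M`: at every point of the zero set of `φ` in `M` there is
a residual. -/
def BigOOrder {E F : Type*} [NormedAddCommGroup E] [NormedSpace ℝ E]
    [NormedAddCommGroup F] [NormedSpace ℝ F]
    (M : Set E) (φ : E → ℝ) (r : ℕ) (f₁ f₂ : E → F) : Prop :=
  ∀ m₀ ∈ M, φ m₀ = 0 → ∃ v : F, IsResidualAt M φ r f₁ f₂ m₀ v

/-
Write `g₂ ∘ f₂ - g₁ ∘ f₁ = (g₂ ∘ f₂ - g₁ ∘ f₂) + (g₁ ∘ f₂ - g₁ ∘ f₁)`. Since `h_N ∘ f₂ = h_M`,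
the first bracket is the residual relation for `g` pulled back along `f₂`, with residual
`δg ∘ f₂ → res(g₂, g₁)(n)`. For the second, `f₂ - f₁ = h_M^r δf`, and strict differentiability of
the `C¹` map `g₁` at `n` gives `g₁ ∘ f₂ - g₁ ∘ f₁ = Dg₁(n)(f₂ - f₁) + o(‖f₂ - f₁‖) = h_M^r (Dg₁(n) δf + o(1))`.
-/

open Filter Topology Asymptotics

section Residual

variable {E F G : Type*} [NormedAddCommGroup E] [NormedSpace ℝ E]
  [NormedAddCommGroup F] [NormedSpace ℝ F] [NormedAddCommGroup G] [NormedSpace ℝ G]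

-- Read with `0⁻¹ = 0`: where `c i = 0` the quotient is `0`, so nothing is claimed there.
theorem HasStrictFDerivAt.tendsto_inv_smul_sub_sub {ι : Type*} {l : Filter ι}
    {g : F → G} {L : F →L[ℝ] G} {n : F} (hg : HasStrictFDerivAt g L n)
    {a b δ : ι → F} {c : ι → ℝ} {v : F}
    (ha : Tendsto a l (𝓝 n)) (hb : Tendsto b l (𝓝 n)) (hδ : Tendsto δ l (𝓝 v))
    (hba : ∀ᶠ i in l, b i - a i = c i • δ i) :
    Tendsto (fun i => (c i)⁻¹ • (g (b i) - g (a i) - L (b i - a i))) l (𝓝 0) := by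
  have hR : (fun i => g (b i) - g (a i) - L (b i - a i)) =o[l] fun i => c i • δ i :=
    (hg.isLittleO.comp_tendsto (hb.prodMk_nhds ha)).congr' .rfl hba
  have hcancel : (fun i => (c i)⁻¹ • c i • δ i) =O[l] δ := by
    refine IsBigO.of_bound 1 (Eventually.of_forall fun i => ?_)
    by_cases hc : c i = 0
    · simp [hc]
    · simp [inv_smul_smul₀ hc]
  rw [← isLittleO_one_iff ℝ]
  exact (((isBigO_refl _ l).smul_isLittleO hR).trans_isBigO hcancel).trans_isBigO
    (hδ.isBigO_one ℝ)

variable {M : Set E} {φ : E → ℝ} {r : ℕ} {m₀ : E}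

theorem IsResidualAt.apply_eq_of_eq_zero {f₁ f₂ : E → F} {v : F}
    (h : IsResidualAt M φ r f₁ f₂ m₀ v) (h0 : φ m₀ = 0) (hr : r ≠ 0) : f₂ m₀ = f₁ m₀ := by
  obtain ⟨U, -, hm₀, -, δ, -, -, hδ⟩ := h
  simpa [h0, zero_pow hr, sub_eq_zero] using hδ m₀ hm₀

theorem IsResidualAt.trans {f₁ f₂ f₃ : E → F} {v w : F}
    (h₁₂ : IsResidualAt M φ r f₁ f₂ m₀ v) (h₂₃ : IsResidualAt M φ r f₂ f₃ m₀ w) :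
    IsResidualAt M φ r f₁ f₃ m₀ (v + w) := by
  obtain ⟨U, hU, hm₀U, hUM, δ, hδc, rfl, hδ⟩ := h₁₂
  obtain ⟨V, hV, hm₀V, -, δ', hδ'c, rfl, hδ'⟩ := h₂₃
  refine ⟨U ∩ V, hU.inter hV, ⟨hm₀U, hm₀V⟩, inter_subset_left.trans hUM, δ + δ',
    hδc.add hδ'c, rfl, fun m hm => ?_⟩
  rw [Pi.add_apply, smul_add, ← hδ m hm.1, ← hδ' m hm.2]
  abel

theorem IsResidualAt.precomp {N : Set F} {ψ : F → ℝ} {g₁ g₂ : F → G} {f : E → F} {v : G}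
    (h : IsResidualAt N ψ r g₁ g₂ (f m₀) v) (hM : M ∈ 𝓝 m₀) (hf : ContinuousAt f m₀)
    (hψ : ∀ m ∈ M, ψ (f m) = φ m) :
    IsResidualAt M φ r (g₁ ∘ f) (g₂ ∘ f) m₀ v := by
  obtain ⟨V, hV, hfV, -, δ, hδc, rfl, hδ⟩ := h
  obtain ⟨U, hUsub, hU, hm₀U⟩ := mem_nhds_iff.mp (inter_mem hM (hf.preimage_mem_nhds
    (hV.mem_nhds hfV)))
  refine ⟨U, hU, hm₀U, fun m hm => (hUsub hm).1, δ ∘ f, hδc.comp hf, rfl, fun m hm => ?_⟩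
  rw [Function.comp_apply, ← hψ m (hUsub hm).1]
  exact hδ (f m) (hUsub hm).2

theorem IsResidualAt.postcomp {f₁ f₂ : E → F} {g : F → G} {L : F →L[ℝ] G} {v : F}
    (h : IsResidualAt M φ r f₁ f₂ m₀ v) (hg : HasStrictFDerivAt g L (f₁ m₀))
    (hf₁ : ContinuousAt f₁ m₀) (hf₂ : ContinuousAt f₂ m₀) (h0 : φ m₀ = 0) (hr : r ≠ 0) :
    IsResidualAt M φ r (g ∘ f₁) (g ∘ f₂) m₀ (L v) := by
  have hf₂₁ := h.apply_eq_of_eq_zero h0 hr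
  obtain ⟨U, hU, hm₀U, hUM, δ, hδc, rfl, hδ⟩ := h
  have hrem := hg.tendsto_inv_smul_sub_sub hf₁ (hf₂₁ ▸ hf₂.tendsto) hδc
    (eventually_of_mem (hU.mem_nhds hm₀U) hδ)
  set δ₂ : E → G := fun m => L (δ m) + (φ m ^ r)⁻¹ • (g (f₂ m) - g (f₁ m) - L (f₂ m - f₁ m))
  have hδ₂m₀ : δ₂ m₀ = L (δ m₀) + 0 := by simp [δ₂, h0, zero_pow hr]
  have hδ₂c : ContinuousAt δ₂ m₀ := by
    rw [ContinuousAt, hδ₂m₀]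
    exact ((L.continuous.tendsto _).comp hδc).add hrem
  refine ⟨U, hU, hm₀U, hUM, δ₂, hδ₂c, by rw [hδ₂m₀, add_zero], fun m hm => ?_⟩
  by_cases hc : φ m ^ r = 0
  · have : f₂ m = f₁ m := by rw [← sub_eq_zero, hδ m hm, hc, zero_smul]
    simp [this, hc]
  · rw [Function.comp_apply, Function.comp_apply, smul_add, smul_inv_smul₀ hc, ← map_smul,
      ← hδ m hm]
    abel

end Residual

theorem stmt6_general {E E' P : Type*}
    [NormedAddCommGroup E] [NormedSpace ℝ E]
    [NormedAddCommGroup E'] [NormedSpace ℝ E']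
    [NormedAddCommGroup P] [NormedSpace ℝ P]
    (M : Set E) (N : Set E') (hM : IsOpen M) (hN : IsOpen N)
    (hM2 : E → ℝ) (hN2 : E' → ℝ)
    (f₁ f₂ : E → E') (g₁ g₂ : E' → P)
    (hf₁m : MapsTo f₁ M N)
    (hf₁ : ContDiffOn ℝ 1 f₁ M) (hf₂ : ContDiffOn ℝ 1 f₂ M)
    (hg₁ : ContDiffOn ℝ 1 g₁ N)
    (hcomp₁ : ∀ m ∈ M, hN2 (f₁ m) = hM2 m)
    (hcomp₂ : ∀ m ∈ M, hN2 (f₂ m) = hM2 m)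
    (r : ℕ) (hr : 1 ≤ r)
    (hOf : BigOOrder M hM2 r f₁ f₂) (hOg : BigOOrder N hN2 r g₁ g₂) :
    BigOOrder M hM2 r (g₁ ∘ f₁) (g₂ ∘ f₂) ∧
    ∀ m ∈ M, hM2 m = 0 → ∀ (vf : E') (vg : P),
      IsResidualAt M hM2 r f₁ f₂ m vf →
      IsResidualAt N hN2 r g₁ g₂ (f₁ m) vg →
      IsResidualAt M hM2 r (g₁ ∘ f₁) (g₂ ∘ f₂) m
        (vg + fderiv ℝ g₁ (f₁ m) vf) := by
  have hres : ∀ m ∈ M, hM2 m = 0 → ∀ (vf : E') (vg : P),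
      IsResidualAt M hM2 r f₁ f₂ m vf → IsResidualAt N hN2 r g₁ g₂ (f₁ m) vg →
      IsResidualAt M hM2 r (g₁ ∘ f₁) (g₂ ∘ f₂) m (vg + fderiv ℝ g₁ (f₁ m) vf) := by
    intro m hm h0 vf vg hvf hvg
    have hr0 : r ≠ 0 := Nat.one_le_iff_ne_zero.mp hr
    have hf₂₁ := hvf.apply_eq_of_eq_zero h0 hr0
    have hf₁c := hf₁.continuousOn.continuousAt (hM.mem_nhds hm)
    have hf₂c := hf₂.continuousOn.continuousAt (hM.mem_nhds hm)
    have hg₁s : HasStrictFDerivAt g₁ (fderiv ℝ g₁ (f₁ m)) (f₁ m) :=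
      (hg₁.contDiffAt (hN.mem_nhds (hf₁m hm))).hasStrictFDerivAt one_ne_zero
    have hpost := hvf.postcomp hg₁s hf₁c hf₂c h0 hr0
    have hpre := (hf₂₁ ▸ hvg).precomp (hM.mem_nhds hm) hf₂c hcomp₂
    rw [add_comm]
    exact hpost.trans hpre
  refine ⟨fun m hm h0 => ?_, hres⟩
  obtain ⟨vf, hvf⟩ := hOf m hm h0
  obtain ⟨vg, hvg⟩ := hOg (f₁ m) (hf₁m hm) (by rw [hcomp₁ m hm, h0])
  exact ⟨_, hres m hm h0 vf vg hvf hvg⟩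

/-- Composition rule for orders and residuals. -/
theorem stmt6 {E E' P : Type*}
    [NormedAddCommGroup E] [NormedSpace ℝ E] [CompleteSpace E]
    [NormedAddCommGroup E'] [NormedSpace ℝ E'] [CompleteSpace E']
    [NormedAddCommGroup P] [NormedSpace ℝ P] [CompleteSpace P]
    (M : Set E) (N : Set E') (hM : IsOpen M) (hN : IsOpen N)
    (hM2 : E → ℝ) (hN2 : E' → ℝ)
    (hhM : ContDiffOn ℝ 1 hM2 M) (hhN : ContDiffOn ℝ 1 hN2 N)
    (hMd : ∀ m ∈ M, hM2 m = 0 → fderiv ℝ hM2 m ≠ 0)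
    (hNd : ∀ x ∈ N, hN2 x = 0 → fderiv ℝ hN2 x ≠ 0)
    (f₁ f₂ : E → E') (g₁ g₂ : E' → P)
    (hf₁m : MapsTo f₁ M N) (hf₂m : MapsTo f₂ M N)
    (hf₁ : ContDiffOn ℝ 1 f₁ M) (hf₂ : ContDiffOn ℝ 1 f₂ M)
    (hg₁ : ContDiffOn ℝ 1 g₁ N) (hg₂ : ContDiffOn ℝ 1 g₂ N)
    (hcomp₁ : ∀ m ∈ M, hN2 (f₁ m) = hM2 m)
    (hcomp₂ : ∀ m ∈ M, hN2 (f₂ m) = hM2 m)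
    (r : ℕ) (hr : 1 ≤ r)
    (hOf : BigOOrder M hM2 r f₁ f₂) (hOg : BigOOrder N hN2 r g₁ g₂) :
    BigOOrder M hM2 r (g₁ ∘ f₁) (g₂ ∘ f₂) ∧
    ∀ m ∈ M, hM2 m = 0 → ∀ (vf : E') (vg : P),
      IsResidualAt M hM2 r f₁ f₂ m vf →
      IsResidualAt N hN2 r g₁ g₂ (f₁ m) vg →
      IsResidualAt M hM2 r (g₁ ∘ f₁) (g₂ ∘ f₂) m
        (vg + fderiv ℝ g₁ (f₁ m) vf) :=
  stmt6_general M N hM hN hM2 hN2 f₁ f₂ g₁ g₂ hf₁m hf₁ hf₂ hg₁ hcomp₁ hcomp₂ r hr hOf hOg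

end
end

section
/- Let k ≥ 1, let (ψ, α⁺, α⁻) be a C^k discretization of the tangent bundle of ℝ^n, and let U ⊆ ℝ × (ℝ^n × ℝ^n) be an open set containing {0} × (ℝ^n × ℝ^n) such that for each h ≠ 0 the map w ↦ (∂⁺_h(w), ∂⁻_h(w)) is a diffeomorphism from {w : (h, w) ∈ U} onto its image. Let (h, q⁺, q⁻) ↦ L^{QQ}_h(q⁺, q⁻) be a map ℝ × ℝ^n × ℝ^n → ℝ that is C¹ in (q⁺, q⁻), and define L_h(w) := L^{QQ}_h(∂⁺_h(w), ∂⁻_h(w)). Then for every h ≠ 0 and all v, ṽ with (h, v), (h, ṽ) ∈ U, the triple (h, v, ṽ) is critical for (L_h, ψ, α⁺, α⁻) if and only if ∂⁺_h(v) = ∂⁻_h(ṽ) and D₁L^{QQ}_h(∂⁺_h(v), ∂⁻_h(v)) + D₂L^{QQ}_h(∂⁺_h(ṽ), ∂⁻_h(ṽ)) = 0, where D₁, D₂ denote partial derivatives in the first and second ℝ^n arguments; the latter is the standard discrete Euler–Lagrange criticality on ℝ^n × ℝ^n. -/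
/-! Since `w ↦ (∂⁺_h w, ∂⁻_h w)` has a differentiable local left inverse, its derivative is
injective, hence bijective on the finite-dimensional phase space. The Lagrangian `L_h` factors
through this map, so the admissible variations are exactly those sent to `(u, 0)` at `v` and to
`(0, u)` at `ṽ`, and every `u` occurs. On these the variational condition reads
`D₁L^{QQ}_h(∂v) u + D₂L^{QQ}_h(∂ṽ) u = 0`. -/

open Set

noncomputable section

/-- The model for ℝ^n. -/
abbrev Vec (n : ℕ) : Type := Fin n → ℝ

/-- The phase space ℝ^n × ℝ^n. -/
abbrev Phase (n : ℕ) : Type := Vec n × Vec n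

/-- A C^k discretization of the tangent bundle of ℝ^n. -/
structure TBDisc (n : ℕ) (k : ℕ) : Type where
  ψ : ℝ → ℝ → Phase n → Vec n
  dom : Set (ℝ × ℝ × Phase n)
  dom_open : IsOpen dom
  dom_zero : ∀ w : Phase n, (0, 0, w) ∈ dom
  ψ_cont : ContinuousOn (fun p : ℝ × ℝ × Phase n => ψ p.1 p.2.1 p.2.2) dom
  a : ℝ
  a_pos : 0 < a
  αp : ℝ → ℝ
  αm : ℝ → ℝ
  αp_smooth : ContDiffOn ℝ 1 αp (Ico 0 a)
  αm_smooth : ContDiffOn ℝ 1 αm (Ico 0 a)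
  αp_nonneg : ∀ h ∈ Ico (0:ℝ) a, 0 ≤ αp h
  αm_nonpos : ∀ h ∈ Ico (0:ℝ) a, αm h ≤ 0
  α_sub : ∀ h ∈ Ico (0:ℝ) a, αp h - αm h = h
  ψ_init : ∀ h w, (h, (0:ℝ), w) ∈ dom → ψ h 0 w = w.1
  ψ_vel : ∀ h w, (h, (0:ℝ), w) ∈ dom → HasDerivAt (fun t => ψ h t w) w.2 0
  bdom : Set (ℝ × Phase n)
  bdom_open : IsOpen bdom
  bdom_zero : ∀ w : Phase n, ((0:ℝ), w) ∈ bdom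
  bp_smooth : ContDiffOn ℝ k (fun p : ℝ × Phase n => ψ p.1 (αp p.1) p.2) bdom
  bm_smooth : ContDiffOn ℝ k (fun p : ℝ × Phase n => ψ p.1 (αm p.1) p.2) bdom
  αpdot : ℝ
  αmdot : ℝ
  αp_deriv : HasDerivWithinAt αp αpdot (Ico 0 a) 0
  αm_deriv : HasDerivWithinAt αm αmdot (Ico 0 a) 0
  bp_deriv : ∀ w : Phase n,
    HasDerivWithinAt (fun h => ψ h (αp h) w) (αpdot • w.2) (Ici 0) 0
  bm_deriv : ∀ w : Phase n,
    HasDerivWithinAt (fun h => ψ h (αm h) w) (αmdot • w.2) (Ici 0) 0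

/-- The boundary map ∂⁺. -/
def TBDisc.bp {n k : ℕ} (D : TBDisc n k) (h : ℝ) (w : Phase n) : Vec n :=
  D.ψ h (D.αp h) w

/-- The boundary map ∂⁻. -/
def TBDisc.bm {n k : ℕ} (D : TBDisc n k) (h : ℝ) (w : Phase n) : Vec n :=
  D.ψ h (D.αm h) w

/-- Criticality of a triple (h, v, ṽ) for a discrete variational principle with
boundary maps `bp`, `bm` and discrete Lagrangian `Lh`. -/
def IsCriticalPt {n : ℕ} (bp bm : ℝ → Phase n → Vec n) (Lh : ℝ → Phase n → ℝ)
    (h : ℝ) (v vt : Phase n) : Prop :=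
  bp h v = bm h vt ∧
  ∀ δv δvt : Phase n,
    fderiv ℝ (bm h) v δv = 0 →
    fderiv ℝ (bp h) vt δvt = 0 →
    fderiv ℝ (bp h) v δv = fderiv ℝ (bm h) vt δvt →
    fderiv ℝ (Lh h) v δv + fderiv ℝ (Lh h) vt δvt = 0

/-- A C^k discretization of a Lagrangian system L. -/
structure LDisc (n k : ℕ) (L : Phase n → ℝ) extends TBDisc n k where
  Lh : ℝ → Phase n → ℝ
  Lh_smooth : ContDiff ℝ k (fun p : ℝ × Phase n => Lh p.1 p.2)
  Lh_zero : ∀ w : Phase n, Lh 0 w = 0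
  Lh_deriv : ∀ w : Phase n, HasDerivAt (fun h => Lh h w) (L w) 0

/-- Regularity of a Lagrangian: the fiber second derivative is everywhere invertible. -/
def IsRegularLagrangian {n : ℕ} (L : Phase n → ℝ) : Prop :=
  ∀ q v : Vec n, Function.Bijective
    (fun u : Vec n => fderiv ℝ (fun w : Vec n => fderiv ℝ (fun x : Vec n => L (q, x)) w) v u)

/-- An Euler–Lagrange flow for the Lagrangian L. -/
structure ELFlow (n : ℕ) (L : Phase n → ℝ) where
  flow : ℝ → Phase n → Phase n
  dom : Set (ℝ × Phase n)
  dom_open : IsOpen dom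
  dom_zero : ∀ w : Phase n, ((0:ℝ), w) ∈ dom
  init : ∀ w : Phase n, flow 0 w = w
  vel : ∀ (w : Phase n) (t : ℝ), (t, w) ∈ dom →
    HasDerivAt (fun s => (flow s w).1) ((flow t w).2) t
  el : ∀ (w : Phase n) (t : ℝ), (t, w) ∈ dom →
    HasDerivAt (fun s => fderiv ℝ (fun u : Vec n => L ((flow s w).1, u)) (flow s w).2)
      (fderiv ℝ (fun x : Vec n => L (x, (flow t w).2)) (flow t w).1) t

open Filter Topology ContinuousLinearMap Function

section Calculus

variable {𝕜 : Type*} [NontriviallyNormedField 𝕜]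
  {E X Y G : Type*} [NormedAddCommGroup E] [NormedSpace 𝕜 E]
  [NormedAddCommGroup X] [NormedSpace 𝕜 X] [NormedAddCommGroup Y] [NormedSpace 𝕜 Y]
  [NormedAddCommGroup G] [NormedSpace 𝕜 G]

theorem ContDiffOn.differentiableAt_comp_prodMk {k : WithTop ℕ∞} {f : X × Y → G}
    {s : Set (X × Y)} (hf : ContDiffOn 𝕜 k f s) (hs : IsOpen s) (hk : k ≠ 0) {x : X} {y : Y}
    (hxy : (x, y) ∈ s) : DifferentiableAt 𝕜 (fun y => f (x, y)) y :=
  ((hf.contDiffAt (hs.mem_nhds hxy)).differentiableAt hk).comp y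
    ((differentiableAt_const x).prodMk differentiableAt_id)

theorem fderiv_curry_left {f : X → Y → G} {a : X} {b : Y}
    (hf : DifferentiableAt 𝕜 (fun p : X × Y => f p.1 p.2) (a, b)) :
    fderiv 𝕜 (fun x => f x b) a =
      (fderiv 𝕜 (fun p : X × Y => f p.1 p.2) (a, b)).comp (inl 𝕜 X Y) :=
  (hf.hasFDerivAt.comp (g := fun p : X × Y => f p.1 p.2) (f := (·, b)) a
    (hasFDerivAt_prodMk_left a b)).fderiv

theorem fderiv_curry_right {f : X → Y → G} {a : X} {b : Y}
    (hf : DifferentiableAt 𝕜 (fun p : X × Y => f p.1 p.2) (a, b)) :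
    fderiv 𝕜 (fun y => f a y) b =
      (fderiv 𝕜 (fun p : X × Y => f p.1 p.2) (a, b)).comp (inr 𝕜 X Y) :=
  (hf.hasFDerivAt.comp (g := fun p : X × Y => f p.1 p.2) b (hasFDerivAt_prodMk_right a b)).fderiv

theorem fderiv_comp₂ {f : X → Y → G} {P : E → X} {M : E → Y} {w : E}
    (hf : DifferentiableAt 𝕜 (fun p : X × Y => f p.1 p.2) (P w, M w))
    (hP : DifferentiableAt 𝕜 P w) (hM : DifferentiableAt 𝕜 M w) :
    fderiv 𝕜 (fun x => f (P x) (M x)) w =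
      (fderiv 𝕜 (fun p : X × Y => f p.1 p.2) (P w, M w)).comp
        ((fderiv 𝕜 P w).prod (fderiv 𝕜 M w)) :=
  (hf.hasFDerivAt.comp (g := fun p : X × Y => f p.1 p.2) w
    (hP.hasFDerivAt.prodMk hM.hasFDerivAt)).fderiv

theorem injective_fderiv_of_eventually_leftInverse {F : E → X} {g : X → E} {w : E}
    (hF : DifferentiableAt 𝕜 F w) (hg : DifferentiableAt 𝕜 g (F w))
    (hgF : ∀ᶠ x in 𝓝 w, g (F x) = x) : Injective (fderiv 𝕜 F w) := by
  have hid : HasFDerivAt (g ∘ F) (.id 𝕜 E) w := (hasFDerivAt_id w).congr_of_eventuallyEq hgF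
  have hchain := (hg.hasFDerivAt.comp w hF.hasFDerivAt).unique hid
  exact LeftInverse.injective (g := fderiv 𝕜 g (F w)) fun u => congr($hchain u)

theorem surjective_fderiv_of_eventually_leftInverse [FiniteDimensional 𝕜 E] {F g : E → E}
    {w : E} (hF : DifferentiableAt 𝕜 F w) (hg : DifferentiableAt 𝕜 g (F w))
    (hgF : ∀ᶠ x in 𝓝 w, g (F x) = x) : Surjective (fderiv 𝕜 F w) :=
  LinearMap.injective_iff_surjective.mp (injective_fderiv_of_eventually_leftInverse hF hg hgF)

end Calculus

section Criticality

variable {𝕜 : Type*} [NontriviallyNormedField 𝕜]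
  {E E' X G : Type*} [NormedAddCommGroup E] [NormedSpace 𝕜 E]
  [NormedAddCommGroup E'] [NormedSpace 𝕜 E'] [NormedAddCommGroup X] [NormedSpace 𝕜 X]
  [NormedAddCommGroup G] [NormedSpace 𝕜 G]

theorem forall_critical_iff_of_surjective {A B : E →L[𝕜] X} {A' B' : E' →L[𝕜] X}
    {φ φ' : X × X →L[𝕜] G} (hAB : Surjective (A.prod B)) (hAB' : Surjective (A'.prod B')) :
    (∀ δ δ', B δ = 0 → A' δ' = 0 → A δ = B' δ' → φ (A δ, B δ) + φ' (A' δ', B' δ') = 0) ↔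
      φ.comp (inl 𝕜 X X) + φ'.comp (inr 𝕜 X X) = 0 := by
  constructor
  · intro hcrit
    ext u
    obtain ⟨δ, hδ⟩ := hAB (u, 0)
    obtain ⟨δ', hδ'⟩ := hAB' (0, u)
    have hAδ : A δ = u := congr_arg Prod.fst hδ
    have hBδ : B δ = 0 := congr_arg Prod.snd hδ
    have hAδ' : A' δ' = 0 := congr_arg Prod.fst hδ'
    have hBδ' : B' δ' = u := congr_arg Prod.snd hδ'
    simpa [hAδ, hBδ, hAδ', hBδ'] using hcrit δ δ' hBδ hAδ' (hAδ.trans hBδ'.symm)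
  · intro hEL δ δ' hB hA' hAB
    rw [hB, hA', hAB]
    simpa using DFunLike.congr_fun hEL (B' δ')

end Criticality

theorem isCriticalPt_iff_of_surjective {n : ℕ} {bp bm : ℝ → Phase n → Vec n}
    {LQQ : ℝ → Vec n → Vec n → ℝ} {h : ℝ} {v vt : Phase n}
    (hLQQ : Differentiable ℝ (fun p : Vec n × Vec n => LQQ h p.1 p.2))
    (hbpv : DifferentiableAt ℝ (bp h) v) (hbmv : DifferentiableAt ℝ (bm h) v)
    (hbpvt : DifferentiableAt ℝ (bp h) vt) (hbmvt : DifferentiableAt ℝ (bm h) vt)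
    (hv : Surjective ((fderiv ℝ (bp h) v).prod (fderiv ℝ (bm h) v)))
    (hvt : Surjective ((fderiv ℝ (bp h) vt).prod (fderiv ℝ (bm h) vt))) :
    IsCriticalPt bp bm (fun h w => LQQ h (bp h w) (bm h w)) h v vt ↔
      bp h v = bm h vt ∧
        fderiv ℝ (fun q => LQQ h q (bm h v)) (bp h v)
          + fderiv ℝ (fun q => LQQ h (bp h vt) q) (bm h vt) = 0 := by
  rw [IsCriticalPt, fderiv_comp₂ (hLQQ _) hbpv hbmv, fderiv_comp₂ (hLQQ _) hbpvt hbmvt,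
    fderiv_curry_left (hLQQ _), fderiv_curry_right (hLQQ _)]
  exact and_congr_right fun _ => forall_critical_iff_of_surjective hv hvt

namespace TBDisc

variable {n k : ℕ} (D : TBDisc n k)

theorem differentiableAt_bp (hk : 1 ≤ k) {h : ℝ} {w : Phase n} (hw : (h, w) ∈ D.bdom) :
    DifferentiableAt ℝ (D.bp h) w :=
  D.bp_smooth.differentiableAt_comp_prodMk D.bdom_open (by exact_mod_cast (by omega : k ≠ 0)) hw

theorem differentiableAt_bm (hk : 1 ≤ k) {h : ℝ} {w : Phase n} (hw : (h, w) ∈ D.bdom) :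
    DifferentiableAt ℝ (D.bm h) w :=
  D.bm_smooth.differentiableAt_comp_prodMk D.bdom_open (by exact_mod_cast (by omega : k ≠ 0)) hw

theorem surjective_fderiv_bp_prod_bm (hk : 1 ≤ k) {h : ℝ} {w : Phase n} (hw : (h, w) ∈ D.bdom)
    {g : Vec n × Vec n → Phase n} (hg : DifferentiableAt ℝ g (D.bp h w, D.bm h w))
    (hgF : ∀ᶠ x in 𝓝 w, g (D.bp h x, D.bm h x) = x) :
    Surjective ((fderiv ℝ (D.bp h) w).prod (fderiv ℝ (D.bm h) w)) := by
  have hbp := D.differentiableAt_bp hk hw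
  have hbm := D.differentiableAt_bm hk hw
  rw [← hbp.fderiv_prodMk hbm]
  exact surjective_fderiv_of_eventually_leftInverse (hbp.prodMk hbm) hg hgF

end TBDisc

theorem stmt9_general {n k : ℕ} (hk : 1 ≤ k) (D : TBDisc n k)
    (U : Set (ℝ × Phase n)) (hU : IsOpen U)
    (hUb : U ⊆ D.bdom)
    -- for each h ≠ 0 the map w ↦ (∂⁺_h(w), ∂⁻_h(w)) is a diffeomorphism onto its image
    (hdiffeo : ∀ h : ℝ, h ≠ 0 →
      ∃ V : Set (Vec n × Vec n), IsOpen V ∧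
        (fun w : Phase n => (D.bp h w, D.bm h w)) '' {w : Phase n | (h, w) ∈ U} = V ∧
        ∃ g : Vec n × Vec n → Phase n, ContDiffOn ℝ k g V ∧
          ∀ w : Phase n, (h, w) ∈ U → g (D.bp h w, D.bm h w) = w)
    (LQQ : ℝ → Vec n → Vec n → ℝ)
    (hLQQ : ∀ h : ℝ, ContDiff ℝ 1 (fun p : Vec n × Vec n => LQQ h p.1 p.2)) :
    ∀ h : ℝ, h ≠ 0 → ∀ v vt : Phase n, (h, v) ∈ U → (h, vt) ∈ U →
      (IsCriticalPt D.bp D.bm (fun h w => LQQ h (D.bp h w) (D.bm h w)) h v vt ↔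
        (D.bp h v = D.bm h vt ∧
          fderiv ℝ (fun q : Vec n => LQQ h q (D.bm h v)) (D.bp h v)
            + fderiv ℝ (fun q : Vec n => LQQ h (D.bp h vt) q) (D.bm h vt) = 0)) := by
  intro h hh v vt hv hvt
  obtain ⟨V, hV, hFV, g, hg, hgF⟩ := hdiffeo h hh
  have hk0 : (k : WithTop ℕ∞) ≠ 0 := by exact_mod_cast (by omega : k ≠ 0)
  have hsurj : ∀ w, (h, w) ∈ U → Surjective ((fderiv ℝ (D.bp h) w).prod (fderiv ℝ (D.bm h) w)) :=
    fun w hw => D.surjective_fderiv_bp_prod_bm hk (hUb hw)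
      ((hg.contDiffAt (hV.mem_nhds (hFV ▸ mem_image_of_mem _ hw))).differentiableAt hk0)
      (eventually_of_mem ((hU.preimage (.prodMk_right h)).mem_nhds hw) fun x hx => hgF x hx)
  exact isCriticalPt_iff_of_surjective ((hLQQ h).differentiable one_ne_zero)
    (D.differentiableAt_bp hk (hUb hv)) (D.differentiableAt_bm hk (hUb hv))
    (D.differentiableAt_bp hk (hUb hvt)) (D.differentiableAt_bm hk (hUb hvt))
    (hsurj v hv) (hsurj vt hvt)

/-- Equivalence of discrete mechanics on TQ with the standard discrete mechanics
on Q × Q: criticality on TQ corresponds to the discrete Euler–Lagrange criterion. -/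
theorem stmt9 {n k : ℕ} (hk : 1 ≤ k) (D : TBDisc n k)
    (U : Set (ℝ × Phase n)) (hU : IsOpen U)
    (hU0 : ∀ w : Phase n, ((0:ℝ), w) ∈ U) (hUb : U ⊆ D.bdom)
    -- for each h ≠ 0 the map w ↦ (∂⁺_h(w), ∂⁻_h(w)) is a diffeomorphism onto its image
    (hdiffeo : ∀ h : ℝ, h ≠ 0 →
      ∃ V : Set (Vec n × Vec n), IsOpen V ∧
        (fun w : Phase n => (D.bp h w, D.bm h w)) '' {w : Phase n | (h, w) ∈ U} = V ∧
        ∃ g : Vec n × Vec n → Phase n, ContDiffOn ℝ k g V ∧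
          ∀ w : Phase n, (h, w) ∈ U → g (D.bp h w, D.bm h w) = w)
    (LQQ : ℝ → Vec n → Vec n → ℝ)
    (hLQQ : ∀ h : ℝ, ContDiff ℝ 1 (fun p : Vec n × Vec n => LQQ h p.1 p.2)) :
    ∀ h : ℝ, h ≠ 0 → ∀ v vt : Phase n, (h, v) ∈ U → (h, vt) ∈ U →
      (IsCriticalPt D.bp D.bm (fun h w => LQQ h (D.bp h w) (D.bm h w)) h v vt ↔
        (D.bp h v = D.bm h vt ∧
          fderiv ℝ (fun q : Vec n => LQQ h q (D.bm h v)) (D.bp h v)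
            + fderiv ℝ (fun q : Vec n => LQQ h (D.bp h vt) q) (D.bm h vt) = 0)) :=
  stmt9_general hk D U hU hUb hdiffeo LQQ hLQQ
end
end

section
/- Let k ≥ 2 and let (ψ, α⁺, α⁻) be a C^k discretization of the tangent bundle of ℝ^n, with boundary maps ∂⁺_h, ∂⁻_h. Then there is an open set A ⊆ ℝ × (ℝ^n × ℝ^n) containing {0} × (ℝ^n × ℝ^n) such that for all (h, w) ∈ A the derivatives (with respect to w) of w ↦ ∂⁺_h(w) and w ↦ ∂⁻_h(w) are surjective, so that C := {(h, v, ṽ) : (h, v) ∈ A, (h, ṽ) ∈ A, ∂⁺_h(v) = ∂⁻_h(ṽ)} is a C^k submanifold of ℝ × (ℝ^n × ℝ^n) × (ℝ^n × ℝ^n); moreover the function φ̂ : C → ℝ^n defined by φ̂(h, v, ṽ) := (∂⁺_h(ṽ) − ∂⁻_h(v))/(2h) for h ≠ 0 and φ̂(0, (q, v), (q, ṽ)) := (v + ṽ)/2 for h = 0 (note that at h = 0 membership in C forces the two base points to coincide) is of class C^{k−1} on C. -/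
open Set

noncomputable section

/-! At `h = 0` both boundary maps reduce to `(q, v) ↦ q` (because `α⁺(0) = α⁻(0) = 0`), so their
derivatives in `q` are the identity there and stay invertible on an open neighbourhood `A` of
`{0} × ℝⁿ × ℝⁿ`. This makes the derivatives in `w` surjective and the joining constraint
`∂⁺_h(v) - ∂⁻_h(ṽ)` a submersion.

The gap `J(h, w) = ∂⁺_h(w) - ∂⁻_h(w)` vanishes at `h = 0` with `h`-derivative
`(α̇⁺(0) - α̇⁻(0)) v = v`. Shrinking `A` so that it contains the segment from `(0, w)` to each of
its points `(h, w)`, Hadamard's lemma `J(h, w) = h ∫₀¹ ∂_h J(t h, w) dt` shows that `J(h, w) / h`,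
extended by `v` at `h = 0`, is `C^{k-1}` on `A`. On the constraint set, `φ̂(h, v, ṽ)` is the mean
of `J(h, v) / h` and `J(h, ṽ) / h`, since the joining condition cancels the two middle terms. -/

open Filter Topology MeasureTheory

universe u

section RadialCore

variable {P : Type*}

def radialCore (S : Set (ℝ × P)) : Set (ℝ × P) :=
  {p | ∀ t ∈ Icc (0:ℝ) 1, (t * p.1, p.2) ∈ S}

lemma IsOpen.radialCore [TopologicalSpace P] {S : Set (ℝ × P)} (hS : IsOpen S) :
    IsOpen (radialCore S) := by
  refine isOpen_iff_eventually.2 fun p hp => isCompact_Icc.eventually_forall_of_forall_eventually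
    fun t ht => ?_
  have hcont : Continuous fun z : (ℝ × P) × ℝ => (z.2 * z.1.1, z.1.2) := by fun_prop
  exact (hS.preimage hcont).mem_nhds (hp t ht)

lemma radialCore_subset (S : Set (ℝ × P)) : radialCore S ⊆ S := fun p hp => by
  simpa using hp 1 ⟨zero_le_one, le_rfl⟩

lemma mk_zero_mem_radialCore {S : Set (ℝ × P)} {w : P} (hw : (0, w) ∈ S) :
    (0, w) ∈ radialCore S := fun t _ => by simpa using hw

end RadialCore

section ParametricIntegral

variable {P F : Type u} [NormedAddCommGroup P] [NormedSpace ℝ P]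
  [NormedAddCommGroup F] [NormedSpace ℝ F] {a b : ℝ} {W : Set (ℝ × P)} {g : ℝ × P → F}

lemma eventually_forall_uIcc_mem_norm_le {X E : Type*} [TopologicalSpace X]
    [SeminormedAddCommGroup E] {W : Set (ℝ × X)} (hW : IsOpen W) {g : ℝ × X → E}
    (hg : ContinuousOn g W) {p₀ : X} (hp₀ : ∀ t ∈ uIcc a b, (t, p₀) ∈ W) :
    ∃ C, ∀ᶠ p in 𝓝 p₀, ∀ t ∈ uIcc a b, (t, p) ∈ W ∧ ‖g (t, p)‖ ≤ C := by
  obtain ⟨C, hC⟩ := isCompact_uIcc.exists_bound_of_continuousOn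
    (hg.comp (by fun_prop : Continuous fun t : ℝ => (t, p₀)).continuousOn hp₀)
  refine ⟨C + 1, isCompact_uIcc.eventually_forall_of_forall_eventually fun t ht => ?_⟩
  have hO : IsOpen (W ∩ g ⁻¹' {y | ‖y‖ < C + 1}) :=
    hg.isOpen_inter_preimage hW (isOpen_lt continuous_norm continuous_const)
  have hmem : (t, p₀) ∈ W ∩ g ⁻¹' {y | ‖y‖ < C + 1} :=
    ⟨hp₀ t ht, (hC t ht).trans_lt (lt_add_one C)⟩
  filter_upwards [continuous_swap.continuousAt.preimage_mem_nhds (hO.mem_nhds hmem)]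
    with z hz using ⟨hz.1, le_of_lt hz.2⟩

lemma continuousOn_intervalIntegral_param {X E : Type*} [TopologicalSpace X]
    [FirstCountableTopology X] [NormedAddCommGroup E] [NormedSpace ℝ E] {W : Set (ℝ × X)}
    (hW : IsOpen W) {g : ℝ × X → E} (hg : ContinuousOn g W) {U : Set X}
    (hUW : ∀ p ∈ U, ∀ t ∈ uIcc a b, (t, p) ∈ W) :
    ContinuousOn (fun p => ∫ t in a..b, g (t, p)) U := by
  intro p₀ hp₀
  obtain ⟨C, hC⟩ := eventually_forall_uIcc_mem_norm_le hW hg (hUW p₀ hp₀)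
  refine ContinuousAt.continuousWithinAt <|
    intervalIntegral.continuousAt_of_dominated_interval (bound := fun _ => C) ?_ ?_
      intervalIntegrable_const ?_
  · filter_upwards [hC] with p hp
    exact ((hg.comp (by fun_prop : Continuous fun t : ℝ => (t, p)).continuousOn
      fun t ht => (hp t ht).1).mono uIoc_subset_uIcc).aestronglyMeasurable measurableSet_uIoc
  · filter_upwards [hC] with p hp
    exact ae_of_all _ fun t ht => (hp t (uIoc_subset_uIcc ht)).2
  · refine ae_of_all _ fun t ht => ?_
    have hmem := hUW p₀ hp₀ t (uIoc_subset_uIcc ht)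
    exact (hg.continuousAt (hW.mem_nhds hmem)).comp
      (by fun_prop : Continuous fun p : X => (t, p)).continuousAt

lemma hasFDerivAt_intervalIntegral_param (hW : IsOpen W) (hg : ContDiffOn ℝ 1 g W) {p₀ : P}
    (hp₀ : ∀ t ∈ uIcc a b, (t, p₀) ∈ W) :
    HasFDerivAt (fun p => ∫ t in a..b, g (t, p))
      (∫ t in a..b, (fderiv ℝ g (t, p₀)).comp (ContinuousLinearMap.inr ℝ ℝ P)) p₀ := by
  have hg' : ContinuousOn (fun q => (fderiv ℝ g q).comp (ContinuousLinearMap.inr ℝ ℝ P)) W :=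
    (hg.continuousOn_fderiv_of_isOpen hW le_rfl).clm_comp continuousOn_const
  obtain ⟨C, hC⟩ := eventually_forall_uIcc_mem_norm_le hW hg' hp₀
  have hslice : ∀ {p}, (∀ t ∈ uIcc a b, (t, p) ∈ W) →
      ContinuousOn (fun t => g (t, p)) (uIcc a b) := fun hp =>
    hg.continuousOn.comp (by fun_prop : Continuous fun t : ℝ => (t, _)).continuousOn hp
  refine intervalIntegral.hasFDerivAt_integral_of_dominated_of_fderiv_le
    (F := fun p t => g (t, p)) (F' := fun p t => (fderiv ℝ g (t, p)).comp (.inr ℝ ℝ P))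
    (bound := fun _ => C) hC ?_ (hslice hp₀).intervalIntegrable ?_ ?_ intervalIntegrable_const ?_
  · filter_upwards [hC] with p hp
    exact ((hslice fun t ht => (hp t ht).1).mono uIoc_subset_uIcc).aestronglyMeasurable
      measurableSet_uIoc
  · exact ((hg'.comp (by fun_prop : Continuous fun t : ℝ => (t, p₀)).continuousOn hp₀).mono
      uIoc_subset_uIcc).aestronglyMeasurable measurableSet_uIoc
  · exact ae_of_all _ fun t ht p hp => (hp t (uIoc_subset_uIcc ht)).2
  · refine ae_of_all _ fun t ht p hp => ?_
    have hmem := (hp t (uIoc_subset_uIcc ht)).1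
    exact ((hg.differentiableOn one_ne_zero _ hmem).differentiableAt
      (hW.mem_nhds hmem)).hasFDerivAt.comp p (hasFDerivAt_prodMk_right t p)

lemma contDiffOn_intervalIntegral_param (hW : IsOpen W) {U : Set P} (hU : IsOpen U)
    (hUW : ∀ p ∈ U, ∀ t ∈ uIcc a b, (t, p) ∈ W) (m : ℕ) (hg : ContDiffOn ℝ m g W) :
    ContDiffOn ℝ m (fun p => ∫ t in a..b, g (t, p)) U := by
  induction m generalizing F with
  | zero => exact contDiffOn_zero.2 (continuousOn_intervalIntegral_param hW hg.continuousOn hUW)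
  | succ m ih =>
    have hg1 : ContDiffOn ℝ 1 g W := hg.of_le (by exact_mod_cast Nat.le_add_left 1 m)
    have hderiv := fun p hp => hasFDerivAt_intervalIntegral_param hW hg1 (hUW p hp)
    rw [Nat.cast_succ, contDiffOn_succ_iff_fderiv_of_isOpen hU]
    refine ⟨fun p hp => (hderiv p hp).differentiableAt.differentiableWithinAt, by simp,
      (ih (g := fun q => (fderiv ℝ g q).comp (.inr ℝ ℝ P)) ?_).congr
        fun p hp => (hderiv p hp).fderiv⟩
    exact (hg.fderiv_of_isOpen hW (by push_cast; exact le_rfl)).clm_comp contDiffOn_const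

end ParametricIntegral

section BlowUp

variable {P F : Type u} [NormedAddCommGroup P] [NormedSpace ℝ P]
  [NormedAddCommGroup F] [NormedSpace ℝ F] [CompleteSpace F] {G : ℝ × P → F} {V : Set (ℝ × P)}

def blowUp (G : ℝ × P → F) (p : ℝ × P) : F :=
  if p.1 = 0 then fderiv ℝ G p (1, 0) else p.1⁻¹ • G p

lemma blowUp_eq_integral (hV : IsOpen V) (hG : ContDiffOn ℝ 1 G V)
    (hG0 : ∀ w, (0, w) ∈ V → G (0, w) = 0) {p : ℝ × P} (hp : p ∈ radialCore V) :
    blowUp G p = ∫ t in (0:ℝ)..1, fderiv ℝ G (t * p.1, p.2) (1, 0) := by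
  obtain ⟨h, w⟩ := p
  have hseg : ∀ t ∈ uIcc (0:ℝ) 1, (t * h, w) ∈ V := fun t ht =>
    hp t (by rwa [uIcc_of_le zero_le_one] at ht)
  by_cases h0 : h = 0
  · subst h0
    simp [blowUp]
  rw [blowUp, if_neg h0, inv_smul_eq_iff₀ h0, ← intervalIntegral.integral_smul]
  have hsmul : ∀ t : ℝ, h • fderiv ℝ G (t * h, w) (1, 0) = fderiv ℝ G (t * h, w) (h, 0) := by
    intro t
    rw [← map_smul, Prod.smul_mk, smul_eq_mul, mul_one, smul_zero]
  have hderiv : ∀ t ∈ uIcc (0:ℝ) 1,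
      HasDerivAt (fun s => G (s * h, w)) (fderiv ℝ G (t * h, w) (h, 0)) t := fun t ht =>
    ((hG.differentiableOn one_ne_zero _ (hseg t ht)).differentiableAt
      (hV.mem_nhds (hseg t ht))).hasFDerivAt.comp_hasDerivAt t
      ((hasDerivAt_mul_const h).prodMk (hasDerivAt_const t w))
  have hcont : ContinuousOn (fun t : ℝ => fderiv ℝ G (t * h, w) (h, 0)) (uIcc 0 1) :=
    ((hG.continuousOn_fderiv_of_isOpen hV le_rfl).comp
      (by fun_prop : Continuous fun t : ℝ => (t * h, w)).continuousOn hseg).clm_apply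
      continuousOn_const
  simp_rw [hsmul]
  rw [intervalIntegral.integral_eq_sub_of_hasDerivAt hderiv hcont.intervalIntegrable,
    zero_mul, hG0 w (by simpa using hseg 0 (by simp)), one_mul, sub_zero]

lemma contDiffOn_blowUp (hV : IsOpen V) {m : ℕ} (hG : ContDiffOn ℝ (m + 1) G V)
    (hG0 : ∀ w, (0, w) ∈ V → G (0, w) = 0) :
    ContDiffOn ℝ m (blowUp G) (radialCore V) := by
  have hW : IsOpen {q : ℝ × (ℝ × P) | (q.1 * q.2.1, q.2.2) ∈ V} :=
    hV.preimage (by fun_prop)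
  have hg : ContDiffOn ℝ m (fun q : ℝ × (ℝ × P) => fderiv ℝ G (q.1 * q.2.1, q.2.2) (1, 0))
      {q | (q.1 * q.2.1, q.2.2) ∈ V} :=
    ((hG.fderiv_of_isOpen hV le_rfl).comp (by fun_prop : ContDiff ℝ m
      fun q : ℝ × (ℝ × P) => (q.1 * q.2.1, q.2.2)).contDiffOn fun _ hq => hq).clm_apply
      contDiffOn_const
  refine (contDiffOn_intervalIntegral_param hW hV.radialCore (fun p hp t ht => ?_) m hg).congr
    fun p hp => blowUp_eq_integral hV (hG.of_le (by exact_mod_cast Nat.le_add_left 1 m)) hG0 hp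
  exact hp t (by rwa [uIcc_of_le zero_le_one] at ht)

end BlowUp

section PartialDerivative

variable {X Y Z : Type*} [NormedAddCommGroup X] [NormedSpace ℝ X] [NormedAddCommGroup Y]
  [NormedSpace ℝ Y] [NormedAddCommGroup Z] [NormedSpace ℝ Z]

def qDeriv (B : ℝ × (X × Y) → Z) (p : ℝ × (X × Y)) : X →L[ℝ] Z :=
  (fderiv ℝ B p).comp ((ContinuousLinearMap.inr ℝ ℝ (X × Y)).comp (.inl ℝ X Y))

lemma continuousOn_qDeriv {B : ℝ × (X × Y) → Z} {S : Set (ℝ × (X × Y))} (hS : IsOpen S)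
    (hB : ContDiffOn ℝ 1 B S) : ContinuousOn (qDeriv B) S :=
  (hB.continuousOn_fderiv_of_isOpen hS le_rfl).clm_comp continuousOn_const

lemma qDeriv_eq_fderiv_comp_inl {B : ℝ × (X × Y) → Z} {h : ℝ} {w : X × Y}
    (hB : DifferentiableAt ℝ B (h, w)) :
    qDeriv B (h, w) = (fderiv ℝ (fun w => B (h, w)) w).comp (.inl ℝ X Y) := by
  have hpartial : HasFDerivAt (fun w => B (h, w))
      ((fderiv ℝ B (h, w)).comp (.inr ℝ ℝ (X × Y))) w :=
    hB.hasFDerivAt.comp w (hasFDerivAt_prodMk_right h w)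
  rw [qDeriv, hpartial.fderiv]
  rfl

lemma isUnit_qDeriv_of_eq_fst [CompleteSpace X] {B : ℝ × (X × Y) → X} {h : ℝ} {w : X × Y}
    (hB : DifferentiableAt ℝ B (h, w)) (hfst : ∀ w, B (h, w) = w.1) :
    IsUnit (qDeriv B (h, w)) := by
  rw [qDeriv_eq_fderiv_comp_inl hB, show (fun w => B (h, w)) = Prod.fst from funext hfst,
    fderiv_fst, ContinuousLinearMap.fst_comp_inl, ← ContinuousLinearMap.one_def]
  exact isUnit_one

lemma surjective_fderiv_of_isUnit_qDeriv [CompleteSpace X] {B : ℝ × (X × Y) → X} {h : ℝ}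
    {w : X × Y} (hB : DifferentiableAt ℝ B (h, w)) (hu : IsUnit (qDeriv B (h, w))) :
    Function.Surjective (fderiv ℝ (fun w => B (h, w)) w) := by
  rw [qDeriv_eq_fderiv_comp_inl hB] at hu
  exact .of_comp (g := ContinuousLinearMap.inl ℝ X Y)
    (ContinuousLinearMap.isUnit_iff_bijective.1 hu).2

lemma surjective_fderiv_sub_of_isUnit_qDeriv [CompleteSpace X] {Bp Bm : ℝ × (X × Y) → X}
    {x : ℝ × (X × Y) × (X × Y)} (hp : DifferentiableAt ℝ Bp (x.1, x.2.1))
    (hm : DifferentiableAt ℝ Bm (x.1, x.2.2)) (hu : IsUnit (qDeriv Bp (x.1, x.2.1))) :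
    Function.Surjective (fderiv ℝ (fun y : ℝ × (X × Y) × (X × Y) =>
      Bp (y.1, y.2.1) - Bm (y.1, y.2.2)) x) := by
  let π₁ : ℝ × (X × Y) × (X × Y) →L[ℝ] ℝ × (X × Y) :=
    (ContinuousLinearMap.fst ℝ ℝ _).prod ((ContinuousLinearMap.fst ℝ _ _).comp (.snd ℝ ℝ _))
  let π₂ : ℝ × (X × Y) × (X × Y) →L[ℝ] ℝ × (X × Y) :=
    (ContinuousLinearMap.fst ℝ ℝ _).prod ((ContinuousLinearMap.snd ℝ _ _).comp (.snd ℝ ℝ _))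
  let ι : X →L[ℝ] ℝ × (X × Y) × (X × Y) :=
    (ContinuousLinearMap.inr ℝ ℝ _).comp ((ContinuousLinearMap.inl ℝ _ _).comp (.inl ℝ X Y))
  have hΦ : HasFDerivAt (fun y : ℝ × (X × Y) × (X × Y) => Bp (y.1, y.2.1) - Bm (y.1, y.2.2))
      ((fderiv ℝ Bp (x.1, x.2.1)).comp π₁ - (fderiv ℝ Bm (x.1, x.2.2)).comp π₂) x :=
    (hp.hasFDerivAt.comp x π₁.hasFDerivAt).sub (hm.hasFDerivAt.comp x π₂.hasFDerivAt)
  have hcomp : (fderiv ℝ (fun y : ℝ × (X × Y) × (X × Y) =>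
      Bp (y.1, y.2.1) - Bm (y.1, y.2.2)) x).comp ι = qDeriv Bp (x.1, x.2.1) := by
    rw [hΦ.fderiv]
    ext u
    simp only [ContinuousLinearMap.comp_apply, sub_apply]
    -- `ι` moves only the first base point, which `π₂` does not see
    exact sub_eq_self.2 (map_zero _)
  exact .of_comp (g := ι) (ContinuousLinearMap.isUnit_iff_bijective.1 (hcomp ▸ hu)).2

end PartialDerivative

namespace TBDisc

variable {n k : ℕ} (D : TBDisc n k)

lemma αp_zero : D.αp 0 = 0 := by
  have h0 : (0:ℝ) ∈ Ico 0 D.a := ⟨le_rfl, D.a_pos⟩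
  linarith [D.α_sub 0 h0, D.αp_nonneg 0 h0, D.αm_nonpos 0 h0]

lemma αm_zero : D.αm 0 = 0 := by
  have h0 : (0:ℝ) ∈ Ico 0 D.a := ⟨le_rfl, D.a_pos⟩
  linarith [D.α_sub 0 h0, D.αp_zero]

lemma αpdot_sub_αmdot : D.αpdot - D.αmdot = 1 := by
  have h0 : (0:ℝ) ∈ Ico 0 D.a := ⟨le_rfl, D.a_pos⟩
  have hid : HasDerivWithinAt (fun h => h) (D.αpdot - D.αmdot) (Ico 0 D.a) 0 :=
    (D.αp_deriv.sub D.αm_deriv).congr (fun h hh => (D.α_sub h hh).symm) (D.α_sub 0 h0).symm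
  exact (uniqueDiffOn_Ico 0 D.a 0 h0).eq_deriv _ hid (hasDerivWithinAt_id 0 _)

lemma bp_zero (w : Phase n) : D.bp 0 w = w.1 := by
  rw [bp, αp_zero]
  exact D.ψ_init 0 w (D.dom_zero w)

lemma bm_zero (w : Phase n) : D.bm 0 w = w.1 := by
  rw [bm, αm_zero]
  exact D.ψ_init 0 w (D.dom_zero w)

variable {D}

lemma differentiableAt_uncurry_bp (hk : 1 ≤ k) {p : ℝ × Phase n} (hp : p ∈ D.bdom) :
    DifferentiableAt ℝ (Function.uncurry D.bp) p :=
  (D.bp_smooth.differentiableOn (by exact_mod_cast (by omega : k ≠ 0)) p hp).differentiableAt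
    (D.bdom_open.mem_nhds hp)

lemma differentiableAt_uncurry_bm (hk : 1 ≤ k) {p : ℝ × Phase n} (hp : p ∈ D.bdom) :
    DifferentiableAt ℝ (Function.uncurry D.bm) p :=
  (D.bm_smooth.differentiableOn (by exact_mod_cast (by omega : k ≠ 0)) p hp).differentiableAt
    (D.bdom_open.mem_nhds hp)

variable (D)

def jump (p : ℝ × Phase n) : Vec n := D.bp p.1 p.2 - D.bm p.1 p.2

lemma contDiffOn_jump : ContDiffOn ℝ k D.jump D.bdom := D.bp_smooth.sub D.bm_smooth

lemma jump_zero (w : Phase n) : D.jump (0, w) = 0 := by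
  simp [jump, bp_zero, bm_zero]

lemma blowUp_jump_zero (hk : 1 ≤ k) (w : Phase n) : blowUp D.jump (0, w) = w.2 := by
  rw [blowUp, if_pos rfl]
  have hdiff : DifferentiableAt ℝ D.jump (0, w) :=
    (differentiableAt_uncurry_bp hk (D.bdom_zero w)).sub
      (differentiableAt_uncurry_bm hk (D.bdom_zero w))
  have hfderiv := hdiff.hasFDerivAt.comp_hasDerivAt (0:ℝ)
    ((hasDerivAt_id' (0:ℝ)).prodMk (hasDerivAt_const (0:ℝ) w))
  have hright := (D.bp_deriv w).sub (D.bm_deriv w)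
  rw [← sub_smul, αpdot_sub_αmdot, one_smul] at hright
  exact (uniqueDiffOn_Ici 0 0 self_mem_Ici).eq_deriv _ hfderiv.hasDerivWithinAt hright

def regularSet : Set (ℝ × Phase n) :=
  radialCore D.bdom ∩ qDeriv (Function.uncurry D.bp) ⁻¹' {L | IsUnit L} ∩
    qDeriv (Function.uncurry D.bm) ⁻¹' {L | IsUnit L}

lemma regularSet_subset_radialCore : D.regularSet ⊆ radialCore D.bdom :=
  fun _ hp => hp.1.1

lemma regularSet_subset_bdom : D.regularSet ⊆ D.bdom :=
  D.regularSet_subset_radialCore.trans (radialCore_subset _)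

lemma isOpen_regularSet (hk : 1 ≤ k) : IsOpen D.regularSet := by
  have hk' : (1 : WithTop ℕ∞) ≤ k := by exact_mod_cast hk
  have hp := (continuousOn_qDeriv D.bdom_open (D.bp_smooth.of_le hk')).mono
    (radialCore_subset D.bdom)
  have hm := (continuousOn_qDeriv D.bdom_open (D.bm_smooth.of_le hk')).mono
    (radialCore_subset D.bdom)
  exact (hm.mono inter_subset_left).isOpen_inter_preimage
    (hp.isOpen_inter_preimage D.bdom_open.radialCore Units.isOpen) Units.isOpen

lemma zero_mem_regularSet (hk : 1 ≤ k) (w : Phase n) : (0, w) ∈ D.regularSet :=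
  ⟨⟨mk_zero_mem_radialCore (D.bdom_zero w),
      isUnit_qDeriv_of_eq_fst (differentiableAt_uncurry_bp hk (D.bdom_zero w)) D.bp_zero⟩,
    isUnit_qDeriv_of_eq_fst (differentiableAt_uncurry_bm hk (D.bdom_zero w)) D.bm_zero⟩

lemma surjective_fderiv_bp (hk : 1 ≤ k) {p : ℝ × Phase n} (hp : p ∈ D.regularSet) :
    Function.Surjective (fderiv ℝ (D.bp p.1) p.2) :=
  surjective_fderiv_of_isUnit_qDeriv
    (differentiableAt_uncurry_bp hk (D.regularSet_subset_bdom hp)) hp.1.2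

lemma surjective_fderiv_bm (hk : 1 ≤ k) {p : ℝ × Phase n} (hp : p ∈ D.regularSet) :
    Function.Surjective (fderiv ℝ (D.bm p.1) p.2) :=
  surjective_fderiv_of_isUnit_qDeriv
    (differentiableAt_uncurry_bm hk (D.regularSet_subset_bdom hp)) hp.2

def constraintSet : Set (ℝ × Phase n × Phase n) :=
  {x | (x.1, x.2.1) ∈ D.regularSet ∧ (x.1, x.2.2) ∈ D.regularSet ∧
    D.bp x.1 x.2.1 = D.bm x.1 x.2.2}

lemma exists_submersion_constraintSet (hk : 1 ≤ k) {x : ℝ × Phase n × Phase n}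
    (hx : x ∈ D.constraintSet) :
    ∃ O : Set (ℝ × Phase n × Phase n), IsOpen O ∧ x ∈ O ∧
      ∃ Φc : ℝ × Phase n × Phase n → Vec n, ContDiffOn ℝ k Φc O ∧
        Function.Surjective (fderiv ℝ Φc x) ∧ D.constraintSet ∩ O = {y ∈ O | Φc y = 0} := by
  have hπ₁ : Continuous fun y : ℝ × Phase n × Phase n => (y.1, y.2.1) := by fun_prop
  have hπ₂ : Continuous fun y : ℝ × Phase n × Phase n => (y.1, y.2.2) := by fun_prop
  refine ⟨{y | (y.1, y.2.1) ∈ D.regularSet ∧ (y.1, y.2.2) ∈ D.regularSet},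
    ((D.isOpen_regularSet hk).preimage hπ₁).inter ((D.isOpen_regularSet hk).preimage hπ₂),
    ⟨hx.1, hx.2.1⟩, fun y => D.bp y.1 y.2.1 - D.bm y.1 y.2.2, ?_, ?_, ?_⟩
  · exact (D.bp_smooth.comp (by fun_prop : ContDiff ℝ k fun y : ℝ × Phase n × Phase n =>
        (y.1, y.2.1)).contDiffOn fun y hy => D.regularSet_subset_bdom hy.1).sub
      (D.bm_smooth.comp (by fun_prop : ContDiff ℝ k fun y : ℝ × Phase n × Phase n =>
        (y.1, y.2.2)).contDiffOn fun y hy => D.regularSet_subset_bdom hy.2)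
  · exact surjective_fderiv_sub_of_isUnit_qDeriv
      (differentiableAt_uncurry_bp hk (D.regularSet_subset_bdom hx.1))
      (differentiableAt_uncurry_bm hk (D.regularSet_subset_bdom hx.2.1)) hx.1.1.2
  · ext y
    simp only [constraintSet, mem_inter_iff, mem_ofPred_eq, sub_eq_zero]
    tauto

lemma contDiffOn_phiHat (hk : 1 ≤ k) :
    ContDiffOn ℝ (k - 1) (fun x : ℝ × Phase n × Phase n =>
      if x.1 = 0 then (2:ℝ)⁻¹ • (x.2.1.2 + x.2.2.2)
      else (2 * x.1)⁻¹ • (D.bp x.1 x.2.2 - D.bm x.1 x.2.1)) D.constraintSet := by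
  have hJ : ContDiffOn ℝ (k - 1 : ℕ) (blowUp D.jump) (radialCore D.bdom) :=
    contDiffOn_blowUp D.bdom_open
      (by rw [← Nat.cast_add_one, Nat.sub_add_cancel hk]; exact D.contDiffOn_jump)
      fun w _ => D.jump_zero w
  have hmean : ContDiffOn ℝ (k - 1 : ℕ) (fun x : ℝ × Phase n × Phase n =>
      (2:ℝ)⁻¹ • (blowUp D.jump (x.1, x.2.1) + blowUp D.jump (x.1, x.2.2))) D.constraintSet :=
    ((hJ.comp (by fun_prop : ContDiff ℝ (k - 1 : ℕ) fun y : ℝ × Phase n × Phase n =>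
        (y.1, y.2.1)).contDiffOn fun y hy => D.regularSet_subset_radialCore hy.1).add
      (hJ.comp (by fun_prop : ContDiff ℝ (k - 1 : ℕ) fun y : ℝ × Phase n × Phase n =>
        (y.1, y.2.2)).contDiffOn fun y hy => D.regularSet_subset_radialCore hy.2.1)).const_smul _
  refine hmean.congr ?_
  rintro ⟨h, v, vt⟩ ⟨-, -, hjoin : D.bp h v = D.bm h vt⟩
  by_cases h0 : h = 0
  · subst h0
    simp only [if_pos, D.blowUp_jump_zero hk]
  · simp only [if_neg h0, blowUp, jump]
    rw [mul_inv, ← smul_smul, ← smul_add, hjoin]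
    congr 2
    abel

end TBDisc

/-- Blow-up of the joining constraint: the constraint set C is a C^k submanifold
and the blown-up constraint map φ̂ is C^{k-1} on it. -/
theorem stmt10 {n k : ℕ} (hk : 2 ≤ k) (D : TBDisc n k) :
    ∃ A : Set (ℝ × Phase n), IsOpen A ∧ (∀ w : Phase n, ((0:ℝ), w) ∈ A) ∧
      A ⊆ D.bdom ∧
      (∀ p ∈ A, Function.Surjective ⇑(fderiv ℝ (D.bp p.1) p.2) ∧
                Function.Surjective ⇑(fderiv ℝ (D.bm p.1) p.2)) ∧
      -- C is a C^k submanifold: locally the zero set of a C^k submersion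
      (∀ p ∈ {x : ℝ × Phase n × Phase n |
          (x.1, x.2.1) ∈ A ∧ (x.1, x.2.2) ∈ A ∧ D.bp x.1 x.2.1 = D.bm x.1 x.2.2},
        ∃ O : Set (ℝ × Phase n × Phase n), IsOpen O ∧ p ∈ O ∧
          ∃ Φc : ℝ × Phase n × Phase n → Vec n,
            ContDiffOn ℝ k Φc O ∧ Function.Surjective ⇑(fderiv ℝ Φc p) ∧
            {x : ℝ × Phase n × Phase n |
                (x.1, x.2.1) ∈ A ∧ (x.1, x.2.2) ∈ A ∧ D.bp x.1 x.2.1 = D.bm x.1 x.2.2}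
              ∩ O = {x ∈ O | Φc x = 0}) ∧
      -- φ̂ is C^{k-1} on C
      ContDiffOn ℝ (k - 1)
        (fun x : ℝ × Phase n × Phase n =>
          if x.1 = 0 then (2:ℝ)⁻¹ • (x.2.1.2 + x.2.2.2)
          else (2 * x.1)⁻¹ • (D.bp x.1 x.2.2 - D.bm x.1 x.2.1))
        {x : ℝ × Phase n × Phase n |
          (x.1, x.2.1) ∈ A ∧ (x.1, x.2.2) ∈ A ∧ D.bp x.1 x.2.1 = D.bm x.1 x.2.2} := by
  have hk1 : 1 ≤ k := by omega
  exact ⟨D.regularSet, D.isOpen_regularSet hk1, D.zero_mem_regularSet hk1,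
    D.regularSet_subset_bdom,
    fun p hp => ⟨D.surjective_fderiv_bp hk1 hp, D.surjective_fderiv_bm hk1 hp⟩,
    fun x hx => D.exists_submersion_constraintSet hk1 hx, D.contDiffOn_phiHat hk1⟩
end
end

section
/- Let g, V : ℝ → ℝ be C^∞ with g > 0, let a ∈ ℝ, and set L(q, v) := g(q)v²/2 − V(q). For (h, q̄, z, v) ∈ ℝ⁴ set q := q̄ − hz/2 and f(h, q̄, z, v) := (∂L/∂v)(q, v) − (∂L/∂v)(q + hv, z − v) + h·(∂L/∂q)(q + hv, z − v), which is the derivative in v of the desingularized discrete action L(q, v) + ahv + L(q + hv, z − v) + ah(z − v). Then for every (q̄₀, z₀) ∈ ℝ² there exist ε > 0 and a C^∞ map γ : (−ε, ε) × (q̄₀ − ε, q̄₀ + ε) × (z₀ − ε, z₀ + ε) → ℝ such that γ(0, q̄, z) = z/2, f(h, q̄, z, γ(h, q̄, z)) = 0 for all (h, q̄, z) in the domain, and γ(h, q̄, z) is the unique v with |v − z₀/2| < ε satisfying f(h, q̄, z, v) = 0. -/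
/-!
At `h = 0` the equation reads `g q̄ (2v − z) = 0`, whose derivative in `v` is `2 g q̄ ≠ 0`, so the
implicit function theorem applies at `(0, q̄₀, z₀, z₀/2)`. Mathlib's implicit function is only known
to be smooth at the base point; smoothness on a whole ball follows by applying the theorem again at
each point of the graph, where the new implicit function agrees with the old one by local
uniqueness of solutions.
-/

open Set

noncomputable section

/-- The one-dimensional example Lagrangian L(q, v) = g(q)v²/2 − V(q). -/
def exL (g V : ℝ → ℝ) (q v : ℝ) : ℝ := g q * v ^ 2 / 2 - V q

/-- The derivative in v of the desingularized discrete action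
L(q, v) + ahv + L(q + hv, z − v) + ah(z − v), where q = q̄ − hz/2. -/
def exf (g V : ℝ → ℝ) (h qb z v : ℝ) : ℝ :=
  deriv (fun u => exL g V (qb - h * z / 2) u) v
    - deriv (fun u => exL g V (qb - h * z / 2 + h * v) u) (z - v)
    + h * deriv (fun x => exL g V x (z - v)) (qb - h * z / 2 + h * v)

open Metric Topology

theorem ContinuousLinearMap.isInvertible_of_apply_one_ne_zero {𝕜 : Type*}
    [NontriviallyNormedField 𝕜] {L : 𝕜 →L[𝕜] 𝕜} (h : L 1 ≠ 0) : L.IsInvertible :=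
  ⟨ContinuousLinearEquiv.unitsEquivAut 𝕜 (Units.mk0 _ h), ContinuousLinearMap.ext_ring (by simp)⟩

theorem fderiv_apply_zero_one {𝕜 E F : Type*} [NontriviallyNormedField 𝕜]
    [NormedAddCommGroup E] [NormedSpace 𝕜 E] [NormedAddCommGroup F] [NormedSpace 𝕜 F]
    {f : E × 𝕜 → F} {x : E} {y : 𝕜} (hf : DifferentiableAt 𝕜 f (x, y)) :
    fderiv 𝕜 f (x, y) (0, 1) = deriv (fun t => f (x, t)) y :=
  (hf.hasFDerivAt.comp_hasDerivAt y ((hasDerivAt_const y x).prodMk (hasDerivAt_id y))).deriv.symm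

theorem isOpen_setOf_isInvertible_fderiv_comp_inr {𝕜 E₁ E₂ F : Type*}
    [NontriviallyNormedField 𝕜] [NormedAddCommGroup E₁] [NormedSpace 𝕜 E₁]
    [NormedAddCommGroup E₂] [NormedSpace 𝕜 E₂] [CompleteSpace E₂]
    [NormedAddCommGroup F] [NormedSpace 𝕜 F] {f : E₁ × E₂ → F}
    (hf : Continuous (fderiv 𝕜 f)) :
    IsOpen {u | (fderiv 𝕜 f u ∘L .inr 𝕜 E₁ E₂).IsInvertible} :=
  ContinuousLinearEquiv.isOpen.preimage
    (((ContinuousLinearMap.compL 𝕜 E₂ (E₁ × E₂) F).flip (.inr 𝕜 E₁ E₂)).continuous.comp hf)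

section ImplicitFunction

variable {𝕜 : Type*} [RCLike 𝕜]
  {E₁ : Type*} [NormedAddCommGroup E₁] [NormedSpace 𝕜 E₁] [CompleteSpace E₁]
  {E₂ : Type*} [NormedAddCommGroup E₂] [NormedSpace 𝕜 E₂] [CompleteSpace E₂]
  {F : Type*} [NormedAddCommGroup F] [NormedSpace 𝕜 F] [CompleteSpace F]
  {f : E₁ × E₂ → F} {n : WithTop ℕ∞}

theorem ContDiffAt.contDiffAt_of_levelSet_subset_graph {ψ : E₁ → E₂} {s : Set (E₁ × E₂)}
    {x : E₁} (hf : ContDiffAt 𝕜 n f (x, ψ x)) (hn : n ≠ 0)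
    (hinv : (fderiv 𝕜 f (x, ψ x) ∘L .inr 𝕜 E₁ E₂).IsInvertible)
    (hs : IsOpen s) (hx : (x, ψ x) ∈ s) (hψ : ∀ v ∈ s, f v = f (x, ψ x) → ψ v.1 = v.2) :
    ContDiffAt 𝕜 n ψ x := by
  set φ := hf.implicitFunction hn hinv
  have hφ : ContDiffAt 𝕜 n φ x := hf.contDiffAt_implicitFunction hn hinv
  have hφx : φ x = ψ x := hf.implicitFunction_apply_self hn hinv
  have hgraph : ∀ᶠ x' in 𝓝 x, (x', φ x') ∈ s :=
    (continuousAt_id.prodMk hφ.continuousAt).preimage_mem_nhds (by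
      simpa only [id, hφx] using hs.mem_nhds hx)
  refine hφ.congr_of_eventuallyEq ?_
  filter_upwards [hgraph, hf.eventually_apply_implicitFunction hn hinv] with x' hs' hf'
  exact hψ _ hs' hf'

theorem ContDiff.exists_implicitFunction_ball (hf : ContDiff 𝕜 n f) (hn : n ≠ 0) {u : E₁ × E₂}
    (hu : (fderiv 𝕜 f u ∘L .inr 𝕜 E₁ E₂).IsInvertible) :
    ∃ ε > 0, ∃ ψ : E₁ → E₂, ContDiffOn 𝕜 n ψ (ball u.1 ε) ∧
      ∀ x ∈ ball u.1 ε, f (x, ψ x) = f u ∧ ∀ y ∈ ball u.2 ε, f (x, y) = f u → y = ψ x := by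
  set ψ := hf.contDiffAt.implicitFunction hn hu
  obtain ⟨r, hr, hball⟩ : ∃ r > 0, ball u r ⊆
      {v | (f v = f u ↔ ψ v.1 = v.2) ∧ (fderiv 𝕜 f v ∘L .inr 𝕜 E₁ E₂).IsInvertible} :=
    Metric.mem_nhds_iff.mp ((hf.contDiffAt.eventually_apply_eq_iff_implicitFunction hn hu).and
      ((isOpen_setOf_isInvertible_fderiv_comp_inr (hf.continuous_fderiv hn)).mem_nhds hu))
  obtain ⟨δ, hδ, hψδ⟩ := Metric.continuousAt_iff.mp
    (hf.contDiffAt.contDiffAt_implicitFunction hn hu).continuousAt r hr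
  rw [hf.contDiffAt.implicitFunction_apply_self hn hu] at hψδ
  have hgraph : ∀ x ∈ ball u.1 (min δ r), (x, ψ x) ∈ ball u r := fun x hx => by
    rw [← ball_prod_same]
    exact ⟨ball_subset_ball (min_le_right _ _) hx, hψδ (ball_subset_ball (min_le_left _ _) hx)⟩
  have hsol : ∀ x ∈ ball u.1 (min δ r), f (x, ψ x) = f u := fun x hx =>
    (hball (hgraph x hx)).1.mpr rfl
  refine ⟨min δ r, lt_min hδ hr, ψ, fun x hx => ?_, fun x hx => ⟨hsol x hx, fun y hy hfy => ?_⟩⟩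
  · refine (ContDiffAt.contDiffAt_of_levelSet_subset_graph hf.contDiffAt hn
      (hball (hgraph x hx)).2 isOpen_ball (hgraph x hx) fun v hv hfv => ?_).contDiffWithinAt
    exact (hball hv).1.mp (hfv.trans (hsol x hx))
  · have hxy : (x, y) ∈ ball u r := by
      rw [← ball_prod_same]
      exact ⟨ball_subset_ball (min_le_right _ _) hx, ball_subset_ball (min_le_right _ _) hy⟩
    exact ((hball hxy).1.mp hfy).symm

end ImplicitFunction

theorem deriv_exL_velocity (g V : ℝ → ℝ) (q v : ℝ) :
    deriv (fun u => exL g V q u) v = g q * v := by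
  have : HasDerivAt (fun u => exL g V q u) (g q * (2 * v) / 2) v := by
    simpa only [exL, Nat.cast_ofNat, Nat.add_one_sub_one, pow_one] using
      (((hasDerivAt_pow 2 v).const_mul (g q)).div_const 2).sub_const (V q)
  rw [this.deriv]
  ring

theorem deriv_exL_position {g V : ℝ → ℝ} (hg : Differentiable ℝ g) (hV : Differentiable ℝ V)
    (w q : ℝ) : deriv (fun x => exL g V x w) q = deriv g q * w ^ 2 / 2 - deriv V q :=
  ((((hg q).hasDerivAt.mul_const (w ^ 2)).div_const 2).sub (hV q).hasDerivAt).deriv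

theorem exf_eq {g V : ℝ → ℝ} (hg : Differentiable ℝ g) (hV : Differentiable ℝ V)
    (h qb z v : ℝ) :
    exf g V h qb z v = g (qb - h * z / 2) * v - g (qb - h * z / 2 + h * v) * (z - v)
      + h * (deriv g (qb - h * z / 2 + h * v) * (z - v) ^ 2 / 2
        - deriv V (qb - h * z / 2 + h * v)) := by
  simp only [exf, deriv_exL_velocity, deriv_exL_position hg hV]

theorem exf_zero (g V : ℝ → ℝ) (qb z v : ℝ) : exf g V 0 qb z v = g qb * (2 * v - z) := by
  simp only [exf, deriv_exL_velocity]
  ring_nf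

theorem contDiff_exf {g V : ℝ → ℝ} {n : WithTop ℕ∞} (hg : ContDiff ℝ (n + 1) g)
    (hV : ContDiff ℝ (n + 1) V) :
    ContDiff ℝ n (fun x : (ℝ × ℝ × ℝ) × ℝ => exf g V x.1.1 x.1.2.1 x.1.2.2 x.2) := by
  simp only [exf_eq (hg.differentiable (by simp)) (hV.differentiable (by simp))]
  have := hg.of_le le_self_add
  have := hV.of_le le_self_add
  have := hg.deriv'
  have := hV.deriv'
  fun_prop

theorem stmt12_general (g V : ℝ → ℝ) (hg : ContDiff ℝ (⊤ : ℕ∞) g) (hV : ContDiff ℝ (⊤ : ℕ∞) V)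
    (hgpos : ∀ q : ℝ, 0 < g q) :
    ∀ qb₀ z₀ : ℝ, ∃ ε > (0:ℝ), ∃ γ : ℝ → ℝ → ℝ → ℝ,
      ContDiffOn ℝ (⊤ : ℕ∞) (fun p : ℝ × ℝ × ℝ => γ p.1 p.2.1 p.2.2)
        (Ioo (-ε) ε ×ˢ Ioo (qb₀ - ε) (qb₀ + ε) ×ˢ Ioo (z₀ - ε) (z₀ + ε)) ∧
      (∀ qb ∈ Ioo (qb₀ - ε) (qb₀ + ε), ∀ z ∈ Ioo (z₀ - ε) (z₀ + ε),
        γ 0 qb z = z / 2) ∧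
      (∀ h ∈ Ioo (-ε) ε, ∀ qb ∈ Ioo (qb₀ - ε) (qb₀ + ε), ∀ z ∈ Ioo (z₀ - ε) (z₀ + ε),
        exf g V h qb z (γ h qb z) = 0 ∧
        ∀ v : ℝ, |v - z₀ / 2| < ε → exf g V h qb z v = 0 → v = γ h qb z) := by
  intro qb₀ z₀
  set f := fun x : (ℝ × ℝ × ℝ) × ℝ => exf g V x.1.1 x.1.2.1 x.1.2.2 x.2
  have hf : ContDiff ℝ (⊤ : ℕ∞) f := contDiff_exf (by simpa using hg) (by simpa using hV)
  have hpartial : HasDerivAt (fun v => f ((0, qb₀, z₀), v)) (g qb₀ * 2) (z₀ / 2) := by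
    simpa only [f, exf_zero, mul_one, sub_zero] using
      (((hasDerivAt_id' (z₀ / 2)).const_mul 2).sub_const z₀).const_mul (g qb₀)
  have hinv : (fderiv ℝ f ((0, qb₀, z₀), z₀ / 2) ∘L .inr ℝ _ _).IsInvertible := by
    refine ContinuousLinearMap.isInvertible_of_apply_one_ne_zero ?_
    rw [ContinuousLinearMap.comp_apply, ContinuousLinearMap.inr_apply,
      fderiv_apply_zero_one (hf.differentiable (by simp) _), hpartial.deriv]
    exact mul_ne_zero (hgpos qb₀).ne' two_ne_zero
  obtain ⟨ε, hε, ψ, hψ, hsol⟩ := hf.exists_implicitFunction_ball (by simp) hinv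
  have hfu : f ((0, qb₀, z₀), z₀ / 2) = 0 := by simp only [f, exf_zero]; ring
  have hbox : Ioo (-ε) ε ×ˢ Ioo (qb₀ - ε) (qb₀ + ε) ×ˢ Ioo (z₀ - ε) (z₀ + ε)
      = ball ((0 : ℝ), qb₀, z₀) ε := by
    simp only [← ball_prod_same, Real.ball_eq_Ioo, zero_sub, zero_add]
  refine ⟨ε, hε, fun h qb z => ψ (h, qb, z), hbox ▸ hψ, fun qb hqb z hz => ?_,
    fun h hh qb hqb z hz => ?_⟩
  · refine ((hsol (0, qb, z) (hbox ▸ ⟨by simpa using hε, hqb, hz⟩)).2 (z / 2) ?_ ?_).symm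
    · have hz' : dist z z₀ < ε := by rwa [← mem_ball, Real.ball_eq_Ioo]
      rw [mem_ball, Real.dist_eq, ← sub_div, abs_div, abs_two, ← Real.dist_eq]
      linarith [dist_nonneg (x := z) (y := z₀)]
    · rw [hfu]
      simp only [f, exf_zero]
      ring
  · obtain ⟨hroot, hunique⟩ := hsol (h, qb, z) (hbox ▸ ⟨hh, hqb, hz⟩)
    rw [hfu] at hroot hunique
    exact ⟨hroot, fun v hv hfv => hunique v (by rwa [mem_ball, Real.dist_eq]) hfv⟩

/-- Discrete existence and uniqueness for the one-dimensional example: the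
desingularized discrete variational principle has a unique, smoothly parametrized
critical point near v = z/2 for small h. -/
theorem stmt12 (g V : ℝ → ℝ) (hg : ContDiff ℝ (⊤ : ℕ∞) g) (hV : ContDiff ℝ (⊤ : ℕ∞) V)
    (hgpos : ∀ q : ℝ, 0 < g q) (a : ℝ) :
    ∀ qb₀ z₀ : ℝ, ∃ ε > (0:ℝ), ∃ γ : ℝ → ℝ → ℝ → ℝ,
      ContDiffOn ℝ (⊤ : ℕ∞) (fun p : ℝ × ℝ × ℝ => γ p.1 p.2.1 p.2.2)
        (Ioo (-ε) ε ×ˢ Ioo (qb₀ - ε) (qb₀ + ε) ×ˢ Ioo (z₀ - ε) (z₀ + ε)) ∧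
      (∀ qb ∈ Ioo (qb₀ - ε) (qb₀ + ε), ∀ z ∈ Ioo (z₀ - ε) (z₀ + ε),
        γ 0 qb z = z / 2) ∧
      (∀ h ∈ Ioo (-ε) ε, ∀ qb ∈ Ioo (qb₀ - ε) (qb₀ + ε), ∀ z ∈ Ioo (z₀ - ε) (z₀ + ε),
        exf g V h qb z (γ h qb z) = 0 ∧
        ∀ v : ℝ, |v - z₀ / 2| < ε → exf g V h qb z v = 0 → v = γ h qb z) :=
  stmt12_general g V hg hV hgpos
end
end
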